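/- arXiv:1403.2012 — 8 statements merged into one kernel-verified Lean document; each statement's English description precedes it below -/
import Mathlib

section
/- Let S be an ergodic measure-preserving transformation of a standard probability space (Y,ν). Let (A_n) be a sequence of Borel subsets of Y such that ν(A_n) → δ > 0 and ‖1_{A_n}∘S − 1_{A_n}‖_{L²} → 0. Then for every Borel subset B ⊆ Y, ν(B ∩ A_n) → ν(B)·δ. -/
/-!
Let `U` be the Koopman isometry `g ↦ g ∘ S` of `L²(ν)` and `fₙ = 1_{Aₙ}`, so `‖U fₙ - fₙ‖ → 0`.
Since `⟪g, fₙ⟫ - ⟪Uᵏ g, fₙ⟫ = ⟪Uᵏ g, Uᵏ fₙ - fₙ⟫`, for each fixed `N` the pairing of `fₙ` with `g`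
is asymptotically the same as with the Birkhoff average `(1/N) ∑_{k<N} Uᵏ g`. By the mean ergodic
theorem these averages converge to the projection of `g` onto the `U`-invariant functions, which by
ergodicity are the constants; for `g = 1_B` the limit is the constant `ν(B)`. Hence
`ν(B ∩ Aₙ) = ⟪1_B, fₙ⟫ ≈ ⟪ν(B), fₙ⟫ = ν(B) ν(Aₙ) → ν(B) δ`.
-/

open MeasureTheory Filter Topology
open scoped InnerProductSpace

theorem LipschitzWith.dist_iterate_le_mul {α : Type*} [PseudoMetricSpace α] {f : α → α}
    (hf : LipschitzWith 1 f) (x : α) (k : ℕ) : dist (f^[k] x) x ≤ k * dist (f x) x := by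
  induction k with
  | zero => simp
  | succ k ih =>
    calc dist (f^[k + 1] x) x ≤ dist (f^[k] (f x)) (f^[k] x) + dist (f^[k] x) x :=
          dist_triangle _ _ _
      _ ≤ dist (f x) x + k * dist (f x) x := by
          gcongr
          simpa using (hf.iterate k).dist_le_mul (f x) x
      _ = (k + 1 : ℕ) * dist (f x) x := by push_cast; ring

namespace LinearIsometry

variable {E : Type*} [NormedAddCommGroup E] [InnerProductSpace ℝ E] (T : E →ₗᵢ[ℝ] E)

theorem abs_inner_sub_inner_iterate_le (g f : E) (k : ℕ) :
    |⟪g, f⟫_ℝ - ⟪T^[k] g, f⟫_ℝ| ≤ k * (‖g‖ * ‖T f - f‖) := by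
  have hinner : ⟪g, f⟫_ℝ - ⟪T^[k] g, f⟫_ℝ = ⟪T^[k] g, T^[k] f - f⟫_ℝ := by
    rw [inner_sub_right, ← coe_pow, inner_map_map]
  calc |⟪g, f⟫_ℝ - ⟪T^[k] g, f⟫_ℝ| ≤ ‖T^[k] g‖ * ‖T^[k] f - f‖ :=
        hinner ▸ abs_real_inner_le_norm _ _
    _ ≤ ‖g‖ * (k * ‖T f - f‖) := by
        rw [← coe_pow, norm_map, ← dist_eq_norm, ← dist_eq_norm, coe_pow]
        gcongr
        exact T.lipschitz.dist_iterate_le_mul f k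
    _ = k * (‖g‖ * ‖T f - f‖) := by ring

theorem abs_inner_sub_inner_birkhoffAverage_le (g f : E) {N : ℕ} (hN : N ≠ 0) :
    |⟪g, f⟫_ℝ - ⟪birkhoffAverage ℝ T _root_.id N g, f⟫_ℝ| ≤ N * (‖g‖ * ‖T f - f‖) := by
  have hsum : ⟪g, f⟫_ℝ - ⟪birkhoffAverage ℝ T _root_.id N g, f⟫_ℝ
      = (N : ℝ)⁻¹ * ∑ k ∈ Finset.range N, (⟪g, f⟫_ℝ - ⟪T^[k] g, f⟫_ℝ) := by
    simp only [birkhoffAverage, birkhoffSum, id_eq, real_inner_smul_left, sum_inner,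
      Finset.sum_sub_distrib, Finset.sum_const, Finset.card_range, nsmul_eq_mul]
    field_simp
  rw [hsum, abs_mul, abs_inv, Nat.abs_cast, inv_mul_le_iff₀ (by positivity)]
  calc |∑ k ∈ Finset.range N, (⟪g, f⟫_ℝ - ⟪T^[k] g, f⟫_ℝ)|
      ≤ ∑ k ∈ Finset.range N, (N : ℝ) * (‖g‖ * ‖T f - f‖) := by
        refine Finset.abs_sum_le_sum_abs _ _ |>.trans (Finset.sum_le_sum fun k hk => ?_)
        refine (T.abs_inner_sub_inner_iterate_le g f k).trans ?_
        gcongr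
        exact (Finset.mem_range.mp hk).le
    _ = N * (N * (‖g‖ * ‖T f - f‖)) := by simp

theorem tendsto_inner_sub_inner_of_tendsto_birkhoffAverage {f : ℕ → E} {C : ℝ}
    (hfC : ∀ n, ‖f n‖ ≤ C) (hTf : Tendsto (fun n => ‖T (f n) - f n‖) atTop (𝓝 0)) {g P : E}
    (hg : Tendsto (birkhoffAverage ℝ T _root_.id · g) atTop (𝓝 P)) :
    Tendsto (fun n => ⟪g, f n⟫_ℝ - ⟪P, f n⟫_ℝ) atTop (𝓝 0) := by
  rw [Metric.tendsto_nhds]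
  intro ε hε
  obtain ⟨N, hN, hNP⟩ : ∃ N, N ≠ 0 ∧ ‖birkhoffAverage ℝ T _root_.id N g - P‖ * C < ε / 2 := by
    have hlim : Tendsto (fun N => ‖birkhoffAverage ℝ T _root_.id N g - P‖ * C) atTop (𝓝 0) := by
      simpa using (tendsto_iff_norm_sub_tendsto_zero.mp hg).mul_const C
    exact ((eventually_ne_atTop 0).and (hlim.eventually (gt_mem_nhds (half_pos hε)))).exists
  have hsmall : ∀ᶠ n in atTop, N * (‖g‖ * ‖T (f n) - f n‖) < ε / 2 := by
    have hlim : Tendsto (fun n => N * (‖g‖ * ‖T (f n) - f n‖)) atTop (𝓝 0) := by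
      simpa using (hTf.const_mul ‖g‖).const_mul (N : ℝ)
    exact hlim.eventually (gt_mem_nhds (half_pos hε))
  filter_upwards [hsmall] with n hn
  rw [Real.dist_eq, sub_zero]
  calc |⟪g, f n⟫_ℝ - ⟪P, f n⟫_ℝ|
      ≤ |⟪g, f n⟫_ℝ - ⟪birkhoffAverage ℝ T _root_.id N g, f n⟫_ℝ|
        + |⟪birkhoffAverage ℝ T _root_.id N g - P, f n⟫_ℝ| := by
        rw [inner_sub_left]
        exact abs_sub_le _ _ _
    _ ≤ N * (‖g‖ * ‖T (f n) - f n‖) + ‖birkhoffAverage ℝ T _root_.id N g - P‖ * C := by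
        gcongr
        · exact T.abs_inner_sub_inner_birkhoffAverage_le g (f n) hN
        · exact (abs_real_inner_le_norm _ _).trans (by gcongr; exact hfC n)
    _ < ε := by linarith

end LinearIsometry

section

variable {Y : Type*} [MeasurableSpace Y] {ν : Measure Y} {S : Y → Y}

namespace MeasureTheory

theorem Lp.compMeasurePreserving_const {E : Type*} [NormedAddCommGroup E] {p : ENNReal}
    [IsFiniteMeasure ν] (hS : MeasurePreserving S ν ν) (c : E) :
    Lp.compMeasurePreserving S hS (Lp.const p ν c) = Lp.const p ν c := by
  refine Lp.ext ?_
  filter_upwards [Lp.coeFn_compMeasurePreserving (Lp.const p ν c) hS,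
    hS.quasiMeasurePreserving.ae_eq_comp (Lp.coeFn_const (p := p) (μ := ν) c),
    Lp.coeFn_const (p := p) (μ := ν) c] with y h₁ h₂ h₃
  rw [h₁, h₂, h₃]
  rfl

theorem Lp.inner_const_one {𝕜 : Type*} [RCLike 𝕜] [IsFiniteMeasure ν] (g : Lp 𝕜 2 ν) :
    ⟪Lp.const 2 ν (1 : 𝕜), g⟫_𝕜 = ∫ y, g y ∂ν := by
  rw [← indicatorConstLp_univ, L2.inner_indicatorConstLp_one, Measure.restrict_univ]

theorem Lp.real_inner_const_indicatorConstLp_one [IsFiniteMeasure ν] (c : ℝ) {s : Set Y}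
    (hs : MeasurableSet s) (hνs : ν s ≠ ⊤) :
    ⟪Lp.const 2 ν c, indicatorConstLp 2 hs hνs (1 : ℝ)⟫_ℝ = c * ν.real s := by
  rw [← indicatorConstLp_univ, L2.inner_indicatorConstLp_indicatorConstLp]
  simp [mul_comm]

theorem norm_indicatorConstLp_one_le_one [IsProbabilityMeasure ν] {p : ENNReal} {s : Set Y}
    (hs : MeasurableSet s) (hνs : ν s ≠ ⊤) : ‖indicatorConstLp p hs hνs (1 : ℝ)‖ ≤ 1 :=
  norm_indicatorConstLp_le.trans <| by
    rw [norm_one, one_mul]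
    exact Real.rpow_le_one measureReal_nonneg measureReal_le_one (by positivity)

theorem MemLp.sq_norm_toLp {φ : Y → ℝ} (hφ : MemLp φ 2 ν) :
    ‖hφ.toLp φ‖ ^ 2 = ∫ y, φ y ^ 2 ∂ν := by
  rw [← real_inner_self_eq_norm_sq, L2.inner_def]
  refine integral_congr_ae ?_
  filter_upwards [hφ.coeFn_toLp] with y hy
  simp [hy, sq]

noncomputable abbrev MeasurePreserving.koopman (hS : MeasurePreserving S ν ν) :
    Lp ℝ 2 ν →ₗᵢ[ℝ] Lp ℝ 2 ν :=
  Lp.compMeasurePreservingₗᵢ ℝ S hS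

theorem MeasurePreserving.sq_norm_koopman_toLp_sub (hS : MeasurePreserving S ν ν)
    {φ : Y → ℝ} (hφ : MemLp φ 2 ν) :
    ‖hS.koopman (hφ.toLp φ) - hφ.toLp φ‖ ^ 2 = ∫ y, (φ (S y) - φ y) ^ 2 ∂ν := by
  change ‖(hφ.comp_measurePreserving hS).toLp (φ ∘ S) - hφ.toLp φ‖ ^ 2 = _
  rw [← MemLp.toLp_sub, MemLp.sq_norm_toLp]
  rfl

end MeasureTheory

namespace Ergodic

theorem exists_eq_const_of_compMeasurePreserving_eq {E : Type*} [NormedAddCommGroup E]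
    {p : ENNReal} [IsFiniteMeasure ν] (hS : Ergodic S ν) {g : Lp E p ν}
    (hg : Lp.compMeasurePreserving S hS.toMeasurePreserving g = g) : ∃ c, g = Lp.const p ν c := by
  obtain ⟨c, hc⟩ := hS.eq_const_of_compMeasurePreserving_eq (congrArg Subtype.val hg)
  exact ⟨c, Subtype.ext hc⟩

theorem tendsto_birkhoffAverage_koopman [IsProbabilityMeasure ν] (hS : Ergodic S ν)
    (g : Lp ℝ 2 ν) :
    Tendsto (birkhoffAverage ℝ hS.toMeasurePreserving.koopman id · g)
      atTop (𝓝 (Lp.const 2 ν (∫ y, g y ∂ν))) := by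
  set T := hS.toMeasurePreserving.koopman.toContinuousLinearMap
  set K := T.eqLocus (1 : Lp ℝ 2 ν →L[ℝ] Lp ℝ 2 ν)
  have hmem : ∀ h, h ∈ K ↔ Lp.compMeasurePreserving S hS.toMeasurePreserving h = h :=
    fun _ => Iff.rfl
  have hlim := T.tendsto_birkhoffAverage_orthogonalProjection
    (LinearIsometry.norm_toContinuousLinearMap_le _) g
  obtain ⟨c, hc⟩ := hS.exists_eq_const_of_compMeasurePreserving_eq
    ((hmem _).mp (K.orthogonalProjectionOnto g).2)
  -- `g` minus its projection is orthogonal to the invariant constants, so both have the same mean.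
  have hperp := K.starProjection_inner_eq_zero g (Lp.const 2 ν 1)
    ((hmem _).mpr (Lp.compMeasurePreserving_const _ _))
  rw [K.starProjection_apply, hc, inner_sub_left, real_inner_comm, Lp.inner_const_one,
    real_inner_comm, Lp.inner_const_one, integral_congr_ae (Lp.coeFn_const ..)] at hperp
  simp only [Function.const_apply, integral_const, probReal_univ, one_smul, sub_eq_zero] at hperp
  rwa [hc, ← hperp] at hlim

end Ergodic

end

theorem stmt0_general {Y : Type*} [MeasurableSpace Y] (ν : Measure Y) [IsProbabilityMeasure ν]
    (S : Y → Y) (hS : Ergodic S ν)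
    (A : ℕ → Set Y) (hA : ∀ n, MeasurableSet (A n))
    (δ : ℝ)
    (hAδ : Tendsto (fun n => (ν (A n)).toReal) atTop (𝓝 δ))
    (hinv : Tendsto
      (fun n => ∫ y, ((A n).indicator (fun _ => (1:ℝ)) (S y)
        - (A n).indicator (fun _ => (1:ℝ)) y) ^ 2 ∂ν) atTop (𝓝 0)) :
    ∀ B : Set Y, MeasurableSet B →
      Tendsto (fun n => (ν (B ∩ A n)).toReal) atTop (𝓝 ((ν B).toReal * δ)) := by
  intro B hB
  set U := hS.toMeasurePreserving.koopman
  set f : ℕ → Lp ℝ 2 ν := fun n => indicatorConstLp 2 (hA n) (measure_ne_top ν _) 1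
  have hUf : Tendsto (fun n => ‖U (f n) - f n‖) atTop (𝓝 0) := by
    have hnorm (n : ℕ) : ‖U (f n) - f n‖ ^ 2 = _ :=
      hS.toMeasurePreserving.sq_norm_koopman_toLp_sub
        (memLp_indicator_const 2 (hA n) (1 : ℝ) (.inr (measure_ne_top ν _)))
    simp_rw [← hnorm] at hinv
    simpa [Real.sqrt_sq (norm_nonneg _)] using hinv.sqrt
  have hlim := U.tendsto_inner_sub_inner_of_tendsto_birkhoffAverage
    (fun n => norm_indicatorConstLp_one_le_one (hA n) _) hUf
    (hS.tendsto_birkhoffAverage_koopman (indicatorConstLp 2 hB (measure_ne_top ν B) 1))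
  simp only [integral_indicatorConstLp, smul_eq_mul, mul_one,
    L2.real_inner_indicatorConstLp_one_indicatorConstLp_one,
    Lp.real_inner_const_indicatorConstLp_one] at hlim
  simpa [measureReal_def] using hlim.add (hAδ.const_mul (ν B).toReal)

/-- Lemma 3.6: asymptotically invariant sets of measure tending to `δ > 0`
spread uniformly over the space, for an ergodic transformation. -/
theorem stmt0 {Y : Type*} [MeasurableSpace Y] (ν : Measure Y) [IsProbabilityMeasure ν]
    (S : Y → Y) (hS : Ergodic S ν)
    (A : ℕ → Set Y) (hA : ∀ n, MeasurableSet (A n))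
    (δ : ℝ) (hδ : 0 < δ)
    (hAδ : Tendsto (fun n => (ν (A n)).toReal) atTop (𝓝 δ))
    (hinv : Tendsto
      (fun n => ∫ y, ((A n).indicator (fun _ => (1:ℝ)) (S y)
        - (A n).indicator (fun _ => (1:ℝ)) y) ^ 2 ∂ν) atTop (𝓝 0)) :
    ∀ B : Set Y, MeasurableSet B →
      Tendsto (fun n => (ν (B ∩ A n)).toReal) atTop (𝓝 ((ν B).toReal * δ)) :=
  stmt0_general ν S hS A hA δ hAδ hinv
end

section
/- Let T be an ergodic measure-preserving ℤ-action on a σ-finite measure space (X,μ), and let (W_n) be a sequence of measurable sets such that μ(W_n △ T_{-g} W_n) → 0 for every g ∈ ℤ. If there exists a set A of finite, strictly positive measure with lim_n μ(A ∩ W_n) = 0, then for every set B of finite measure, lim_n μ(B ∩ W_n) = 0. -/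
/-!
The translates `T g ⁻¹' A` are asymptotically disjoint from `W n`, because almost invariance of
`W n` lets one move `T g` from `A` onto `W n` at a vanishing cost. Their union is `T 1`-invariant
and has positive measure, hence is conull by ergodicity. A set `B` of finite measure is therefore
covered, up to measure `ε`, by finitely many translates, and finite unions of asymptotically
disjoint sets are again asymptotically disjoint.
-/

open MeasureTheory Filter Topology Set

section

variable {X ι : Type*} [MeasurableSpace X] {μ : Measure X} {l : Filter ι} {W : ι → Set X}

theorem tendsto_measure_biUnion_inter_zero {κ : Type*} (t : Finset κ) {s : κ → Set X}
    (hs : ∀ k ∈ t, Tendsto (fun n => μ (s k ∩ W n)) l (𝓝 0)) :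
    Tendsto (fun n => μ ((⋃ k ∈ t, s k) ∩ W n)) l (𝓝 0) := by
  have hsum := tendsto_finsetSum t hs
  rw [Finset.sum_const_zero] at hsum
  refine tendsto_of_tendsto_of_tendsto_of_le_of_le tendsto_const_nhds hsum (fun _ => zero_le)
    fun n => ?_
  rw [iUnion₂_inter]
  exact measure_biUnion_finset_le t _

theorem tendsto_measure_inter_zero_of_forall_measure_diff_le {B : Set X}
    (h : ∀ ε > 0, ∃ C, μ (B \ C) ≤ ε ∧ Tendsto (fun n => μ (C ∩ W n)) l (𝓝 0)) :
    Tendsto (fun n => μ (B ∩ W n)) l (𝓝 0) := by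
  rw [ENNReal.tendsto_nhds_zero]
  intro ε hε
  have hε2 : 0 < ε / 2 := ENNReal.half_pos hε.ne'
  obtain ⟨C, hBC, hC⟩ := h (ε / 2) hε2
  filter_upwards [ENNReal.tendsto_nhds_zero.1 hC (ε / 2) hε2] with n hn
  have hcover : B ∩ W n ⊆ (B \ C) ∪ (C ∩ W n) := by
    rintro x ⟨hxB, hxW⟩
    by_cases hxC : x ∈ C
    · exact Or.inr ⟨hxC, hxW⟩
    · exact Or.inl ⟨hxB, hxC⟩
  calc μ (B ∩ W n) ≤ μ (B \ C) + μ (C ∩ W n) := (measure_mono hcover).trans (measure_union_le _ _)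
    _ ≤ ε / 2 + ε / 2 := add_le_add hBC hn
    _ = ε := ENNReal.add_halves ε

theorem exists_finset_measure_diff_biUnion_lt {κ : Type*} [Countable κ] {s : κ → Set X}
    (hs : ∀ k, MeasurableSet (s k)) {B : Set X} (hB : MeasurableSet B) (hBfin : μ B ≠ ⊤)
    (hBs : μ (B \ ⋃ k, s k) = 0) {ε : ENNReal} (hε : 0 < ε) :
    ∃ t : Finset κ, μ (B \ ⋃ k ∈ t, s k) < ε := by
  have hanti : Antitone fun t : Finset κ => B \ ⋃ k ∈ t, s k := fun t t' htt' =>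
    sdiff_subset_sdiff_right (biUnion_subset_biUnion_left htt')
  have hinf : ⨅ t : Finset κ, μ (B \ ⋃ k ∈ t, s k) = 0 := by
    rw [← hanti.directed_ge.measure_iInter
      (fun t => (hB.diff (t.measurableSet_biUnion fun k _ => hs k)).nullMeasurableSet)
      ⟨∅, by simpa using hBfin⟩, ← sdiff_iUnion, ← iUnion_eq_iUnion_finset]
    exact hBs
  rw [← hinf] at hε
  exact iInf_lt_iff.1 hε

theorem tendsto_measure_inter_zero_of_measure_diff_iUnion_eq_zero {κ : Type*} [Countable κ]
    {s : κ → Set X} (hs : ∀ k, MeasurableSet (s k))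
    (hsW : ∀ k, Tendsto (fun n => μ (s k ∩ W n)) l (𝓝 0))
    {B : Set X} (hB : MeasurableSet B) (hBfin : μ B ≠ ⊤) (hBs : μ (B \ ⋃ k, s k) = 0) :
    Tendsto (fun n => μ (B ∩ W n)) l (𝓝 0) := by
  refine tendsto_measure_inter_zero_of_forall_measure_diff_le fun ε hε => ?_
  obtain ⟨t, ht⟩ := exists_finset_measure_diff_biUnion_lt hs hB hBfin hBs hε
  exact ⟨_, ht.le, tendsto_measure_biUnion_inter_zero t fun k _ => hsW k⟩

theorem MeasureTheory.MeasurePreserving.measure_preimage_inter_le {f : X → X}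
    (hf : MeasurePreserving f μ μ) (A V : Set X) :
    μ (f ⁻¹' A ∩ V) ≤ μ (A ∩ V) + μ (symmDiff V (f ⁻¹' V)) := by
  have hcover : f ⁻¹' A ∩ V ⊆ f ⁻¹' (A ∩ V) ∪ symmDiff V (f ⁻¹' V) := by
    rintro x ⟨hxA, hxV⟩
    by_cases hx : x ∈ f ⁻¹' V
    · exact Or.inl ⟨hxA, hx⟩
    · exact Or.inr (mem_symmDiff.2 (Or.inl ⟨hxV, hx⟩))
  calc μ (f ⁻¹' A ∩ V) ≤ μ (f ⁻¹' (A ∩ V)) + μ (symmDiff V (f ⁻¹' V)) :=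
        (measure_mono hcover).trans (measure_union_le _ _)
    _ ≤ μ (A ∩ V) + μ (symmDiff V (f ⁻¹' V)) :=
        add_le_add_left (hf.measure_preimage_le _) _

theorem MeasureTheory.MeasurePreserving.tendsto_measure_preimage_inter_zero {f : X → X}
    (hf : MeasurePreserving f μ μ) {A : Set X} (hA : Tendsto (fun n => μ (A ∩ W n)) l (𝓝 0))
    (hW : Tendsto (fun n => μ (symmDiff (W n) (f ⁻¹' W n))) l (𝓝 0)) :
    Tendsto (fun n => μ (f ⁻¹' A ∩ W n)) l (𝓝 0) := by
  have hsum := hA.add hW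
  rw [add_zero] at hsum
  exact tendsto_of_tendsto_of_tendsto_of_le_of_le tendsto_const_nhds hsum (fun _ => zero_le)
    fun n => hf.measure_preimage_inter_le A (W n)

theorem Ergodic.measure_compl_iUnion_preimage_eq_zero {T : ℤ → X → X} (herg : Ergodic (T 1) μ)
    (hmp : ∀ g, MeasurePreserving (T g) μ μ) (hadd : ∀ g h x, T (g + h) x = T g (T h x))
    {A : Set X} (hA : MeasurableSet A) (hA0 : μ A ≠ 0) : μ (⋃ g, T g ⁻¹' A)ᶜ = 0 := by
  have hinv : T 1 ⁻¹' ⋃ g, T g ⁻¹' A = ⋃ g, T g ⁻¹' A := by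
    have hshift : ∀ g, T 1 ⁻¹' (T g ⁻¹' A) = T (g + 1) ⁻¹' A := fun g => by
      ext x; simp [hadd]
    simp only [preimage_iUnion, hshift]
    exact (Equiv.addRight (1 : ℤ)).iSup_comp (g := fun g => T g ⁻¹' A)
  refine (herg.measure_self_or_compl_eq_zero (.iUnion fun g => (hmp g).measurable hA)
    hinv).resolve_left fun hU => hA0 ?_
  rw [← (hmp 0).measure_preimage hA.nullMeasurableSet]
  exact measure_mono_null (subset_iUnion (fun g => T g ⁻¹' A) 0) hU

end

theorem stmt2_general {X : Type*} [MeasurableSpace X] (μ : Measure X)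
    (T : ℤ → X → X) (hmp : ∀ g, MeasurePreserving (T g) μ μ)
    (hadd : ∀ g h x, T (g + h) x = T g (T h x))
    (herg : Ergodic (T 1) μ)
    (W : ℕ → Set X)
    (hWinv : ∀ g : ℤ, Tendsto (fun n => μ (symmDiff (W n) (T g ⁻¹' W n))) atTop (𝓝 0))
    (A : Set X) (hA : MeasurableSet A) (hA0 : 0 < μ A)
    (hAW : Tendsto (fun n => μ (A ∩ W n)) atTop (𝓝 0)) :
    ∀ B : Set X, MeasurableSet B → μ B ≠ ⊤ →
      Tendsto (fun n => μ (B ∩ W n)) atTop (𝓝 0) := by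
  intro B hB hBfin
  have hconull := herg.measure_compl_iUnion_preimage_eq_zero hmp hadd hA hA0.ne'
  exact tendsto_measure_inter_zero_of_measure_diff_iUnion_eq_zero
    (fun g => (hmp g).measurable hA)
    (fun g => (hmp g).tendsto_measure_preimage_inter_zero hAW (hWinv g)) hB hBfin
    (measure_mono_null (sdiff_subset_compl B _) hconull)

/-- Lemma 3.3 (abstract form): for an ergodic measure-preserving `ℤ`-action and
asymptotically invariant sets `W_n`, if some set of finite positive measure is
asymptotically disjoint from `W_n`, then so is every set of finite measure. -/
theorem stmt2 {X : Type*} [MeasurableSpace X] (μ : Measure X) [SigmaFinite μ]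
    (T : ℤ → X → X) (hmp : ∀ g, MeasurePreserving (T g) μ μ)
    (hadd : ∀ g h x, T (g + h) x = T g (T h x)) (hzero : ∀ x, T 0 x = x)
    (herg : Ergodic (T 1) μ)
    (W : ℕ → Set X) (hW : ∀ n, MeasurableSet (W n))
    (hWinv : ∀ g : ℤ, Tendsto (fun n => μ (symmDiff (W n) (T g ⁻¹' W n))) atTop (𝓝 0))
    (A : Set X) (hA : MeasurableSet A) (hA0 : 0 < μ A) (hAfin : μ A ≠ ⊤)
    (hAW : Tendsto (fun n => μ (A ∩ W n)) atTop (𝓝 0)) :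
    ∀ B : Set X, MeasurableSet B → μ B ≠ ⊤ →
      Tendsto (fun n => μ (B ∩ W n)) atTop (𝓝 0) :=
  stmt2_general μ T hmp hadd herg W hWinv A hA hA0 hAW
end

section
/- Let k ≥ 1 and let T be an invertible measure-preserving transformation of a probability space (X,μ). Suppose X is partitioned (up to null sets) into k Rokhlin towers: X = ⨆_{j=1}^k ⨆_{i=0}^{h_j−1} T^i B_j with the sets T^i B_j (0 ≤ i < h_j, 1 ≤ j ≤ k) pairwise disjoint, so that T^{h_j} B_j ⊆ ⨆_{l=1}^k B_l for each j. Then there exist an index j₀ with μ(B_{j₀}) = max_j μ(B_j), an index j* ∈ {1,…,k}, and a positive integer m that is a sum of at most k of the heights h_{j_1},…,h_{j_b} (with b ≤ k), such that μ(T^m B_{j*} ∩ B_{j*}) ≥ μ(B_{j₀}) / k^k. -/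
/-!
Starting from a base `B_{j₀}` of maximal measure, push a subset of the current base up its tower:
it lands in the union of the bases, so one base receives at least a `1/k` share of it. Iterating
`k` times gives bases `B_{l 0}, …, B_{l k}` and sets `A_t ⊆ B_{l t}` of measure at least
`μ(B_{j₀}) / k^t`, each contained in a translate of the previous one. Among the `k + 1` indices
two coincide, `l s = l (s + n)`, and then `A_{s+n} ⊆ T^m B_{l s} ∩ B_{l s}` with `m` the sum of
the `n` heights climbed in between.
-/

open MeasureTheory Finset
open scoped ENNReal

theorem MeasureTheory.exists_measure_le_card_mul_measure_inter {X ι : Type*} [MeasurableSpace X]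
    [Fintype ι] [Nonempty ι] (μ : Measure X) (B : ι → Set X) {S : Set X}
    (hS : μ (S \ ⋃ i, B i) = 0) : ∃ i, μ S ≤ Fintype.card ι * μ (S ∩ B i) := by
  obtain ⟨i, hi⟩ := Finite.exists_max fun i => μ (S ∩ B i)
  refine ⟨i, ?_⟩
  calc μ S ≤ μ (S ∩ ⋃ i, B i) + μ (S \ ⋃ i, B i) := measure_le_inter_add_sdiff μ S _
    _ = μ (⋃ i, S ∩ B i) := by rw [hS, add_zero, Set.inter_iUnion]
    _ ≤ ∑ i, μ (S ∩ B i) := measure_iUnion_fintype_le μ _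
    _ ≤ ∑ _j : ι, μ (S ∩ B i) := sum_le_sum fun j _ => hi j
    _ = Fintype.card ι * μ (S ∩ B i) := by simp [card_univ, nsmul_eq_mul]

theorem le_pow_mul_of_le_mul_succ {α : Type*} [CommMonoid α] [Preorder α] [MulLeftMono α]
    {a : ℕ → α} {c : α} (h : ∀ t, a t ≤ c * a (t + 1)) (t : ℕ) : a 0 ≤ c ^ t * a t := by
  induction t with
  | zero => simp
  | succ t ih =>
    calc a 0 ≤ c ^ t * a t := ih
      _ ≤ c ^ t * (c * a (t + 1)) := mul_le_mul_right (h t) _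
      _ = c ^ (t + 1) * a (t + 1) := by rw [pow_succ, mul_assoc]

theorem Fintype.exists_map_eq_map_add_of_le_card {ι : Type*} [Fintype ι] (l : ℕ → ι) :
    ∃ s n, 0 < n ∧ s + n ≤ Fintype.card ι ∧ l s = l (s + n) := by
  obtain ⟨a, b, hab, heq⟩ := Fintype.exists_ne_map_eq_of_card_lt (fun t : Fin (card ι + 1) => l t)
    (by simp)
  rcases lt_or_gt_of_ne hab with h | h
  · exact ⟨a, b - a, by omega, by omega, by simpa [Nat.add_sub_cancel' h.le] using heq⟩
  · exact ⟨b, a - b, by omega, by omega, by simpa [Nat.add_sub_cancel' h.le] using heq.symm⟩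

section IntAction

variable {X : Type*} {T : ℤ → X → X}

theorem image_eq_preimage_neg_of_add (hadd : ∀ g h x, T (g + h) x = T g (T h x))
    (hzero : ∀ x, T 0 x = x) (g : ℤ) (S : Set X) : T g '' S = T (-g) ⁻¹' S :=
  congrFun (Set.image_eq_preimage_of_inverse (fun x => by rw [← hadd, neg_add_cancel, hzero])
    (fun x => by rw [← hadd, add_neg_cancel, hzero])) S

theorem subset_image_sum_of_subset_image_succ (hadd : ∀ g h x, T (g + h) x = T g (T h x))
    (hzero : ∀ x, T 0 x = x) {A : ℕ → Set X} {H : ℕ → ℕ}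
    (hA : ∀ t, A (t + 1) ⊆ T (H t) '' A t) (s n : ℕ) :
    A (s + n) ⊆ T ((∑ u ∈ range n, H (s + u) : ℕ) : ℤ) '' A s := by
  induction n with
  | zero => simp [hzero]
  | succ n ih =>
    calc A (s + (n + 1)) ⊆ T (H (s + n)) '' A (s + n) := hA (s + n)
      _ ⊆ T (H (s + n)) '' (T ((∑ u ∈ range n, H (s + u) : ℕ) : ℤ) '' A s) := Set.image_mono ih
      _ = T ((∑ u ∈ range (n + 1), H (s + u) : ℕ) : ℤ) '' A s := by
        simp only [Set.image_image, ← hadd, sum_range_succ]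
        push_cast
        rw [add_comm]

variable [MeasurableSpace X] {μ : Measure X} {ι : Type*} [Fintype ι] [Nonempty ι]
  {B : ι → Set X} {hgt : ι → ℕ}

theorem exists_measure_le_card_mul_measure_image_inter
    (hmp : ∀ g, MeasurePreserving (T g) μ μ) (hadd : ∀ g h x, T (g + h) x = T g (T h x))
    (hzero : ∀ x, T 0 x = x) (hret : ∀ j, μ ((T (hgt j : ℤ) '' B j) \ ⋃ l, B l) = 0)
    {j : ι} {A : Set X} (hA : MeasurableSet A) (hAB : A ⊆ B j) :
    ∃ l, μ A ≤ Fintype.card ι * μ (T (hgt j : ℤ) '' A ∩ B l) := by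
  have hS : μ (T (hgt j : ℤ) '' A \ ⋃ l, B l) = 0 :=
    measure_mono_null (Set.sdiff_subset_sdiff_left (Set.image_mono hAB)) (hret j)
  have hμA : μ (T (hgt j : ℤ) '' A) = μ A := by
    rw [image_eq_preimage_neg_of_add hadd hzero]
    exact (hmp _).measure_preimage hA.nullMeasurableSet
  simpa only [hμA] using exists_measure_le_card_mul_measure_inter μ B hS

theorem exists_tower_path
    (hmp : ∀ g, MeasurePreserving (T g) μ μ) (hadd : ∀ g h x, T (g + h) x = T g (T h x))
    (hzero : ∀ x, T 0 x = x) (hB : ∀ j, MeasurableSet (B j))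
    (hret : ∀ j, μ ((T (hgt j : ℤ) '' B j) \ ⋃ l, B l) = 0) (j₀ : ι) :
    ∃ (l : ℕ → ι) (A : ℕ → Set X), A 0 = B j₀ ∧ ∀ t, MeasurableSet (A t) ∧ A t ⊆ B (l t) ∧
      A (t + 1) ⊆ T (hgt (l t) : ℤ) '' A t ∧ μ (A t) ≤ Fintype.card ι * μ (A (t + 1)) := by
  -- stated as an implication so that `choose` yields a successor map on all of `ι × Set X`
  have step : ∀ j A, ∃ l, MeasurableSet A → A ⊆ B j →
      μ A ≤ Fintype.card ι * μ (T (hgt j : ℤ) '' A ∩ B l) := fun j A => by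
    by_cases hA : MeasurableSet A ∧ A ⊆ B j
    · obtain ⟨l, hl⟩ := exists_measure_le_card_mul_measure_image_inter hmp hadd hzero hret hA.1 hA.2
      exact ⟨l, fun _ _ => hl⟩
    · exact ⟨j, fun h₁ h₂ => (hA ⟨h₁, h₂⟩).elim⟩
  choose next hnext using step
  let path : ℕ → ι × Set X := fun t =>
    (fun p => (next p.1 p.2, T (hgt p.1 : ℤ) '' p.2 ∩ B (next p.1 p.2)))^[t] (j₀, B j₀)
  have hsucc : ∀ t, path (t + 1) = (next (path t).1 (path t).2,
      T (hgt (path t).1 : ℤ) '' (path t).2 ∩ B (next (path t).1 (path t).2)) :=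
    fun t => Function.iterate_succ_apply' _ t _
  have hsub : ∀ t, (path t).2 ⊆ B (path t).1
    | 0 => subset_rfl
    | t + 1 => by rw [hsucc]; exact Set.inter_subset_right
  have hmeas : ∀ t, MeasurableSet (path t).2 := by
    intro t
    induction t with
    | zero => exact hB j₀
    | succ t ih =>
      rw [hsucc]
      exact (image_eq_preimage_neg_of_add hadd hzero _ _ ▸ (hmp _).measurable ih).inter (hB _)
  refine ⟨fun t => (path t).1, fun t => (path t).2, rfl, fun t => ⟨hmeas t, hsub t, ?_, ?_⟩⟩
  · dsimp only; rw [hsucc]; exact Set.inter_subset_left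
  · dsimp only; rw [hsucc]; exact hnext _ _ (hmeas t) (hsub t)

end IntAction

theorem stmt3_general {X : Type*} [MeasurableSpace X] (μ : Measure X)
    (T : ℤ → X → X) (hmp : ∀ g, MeasurePreserving (T g) μ μ)
    (hadd : ∀ g h x, T (g + h) x = T g (T h x)) (hzero : ∀ x, T 0 x = x)
    (k : ℕ) (hk : 1 ≤ k)
    (B : Fin k → Set X) (hBmeas : ∀ j, MeasurableSet (B j))
    (hgt : Fin k → ℕ) (hpos : ∀ j, 0 < hgt j)
    (hret : ∀ j, μ ((T (hgt j : ℤ) '' B j) \ ⋃ l, B l) = 0) :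
    ∃ j₀ : Fin k, (∀ j, μ (B j) ≤ μ (B j₀)) ∧
      ∃ (jstar : Fin k) (m : ℕ), 0 < m ∧
        (∃ (b : ℕ), b ≤ k ∧ ∃ c : Fin b → Fin k, m = ∑ i, hgt (c i)) ∧
        μ (B j₀) / (k : ℝ≥0∞) ^ k ≤ μ (T (m:ℤ) '' B jstar ∩ B jstar) := by
  have : Nonempty (Fin k) := ⟨⟨0, hk⟩⟩
  obtain ⟨j₀, hj₀⟩ := Finite.exists_max fun j => μ (B j)
  obtain ⟨l, A, hA₀, hA⟩ := exists_tower_path hmp hadd hzero hBmeas hret j₀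
  obtain ⟨s, n, hn, hsn, hls⟩ := Fintype.exists_map_eq_map_add_of_le_card l
  rw [Fintype.card_fin] at hsn hA
  refine ⟨j₀, hj₀, l s, ∑ u ∈ range n, hgt (l (s + u)),
    sum_pos (fun u _ => hpos _) (nonempty_range_iff.mpr hn.ne'),
    ⟨n, by omega, fun i => l (s + i), (Fin.sum_univ_eq_sum_range _ n).symm⟩, ?_⟩
  have hreturn : A (s + n) ⊆ T ((∑ u ∈ range n, hgt (l (s + u)) : ℕ) : ℤ) '' B (l s) ∩ B (l s) :=
    Set.subset_inter
      ((subset_image_sum_of_subset_image_succ hadd hzero (fun t => (hA t).2.2.1) s n).trans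
        (Set.image_mono (hA s).2.1))
      (hls ▸ (hA (s + n)).2.1)
  refine ENNReal.div_le_of_le_mul' ?_
  calc μ (B j₀) = μ (A 0) := by rw [hA₀]
    _ ≤ k ^ (s + n) * μ (A (s + n)) := le_pow_mul_of_le_mul_succ (fun t => (hA t).2.2.2) _
    _ ≤ k ^ k * μ (A (s + n)) := by gcongr; exact_mod_cast hk
    _ ≤ k ^ k * μ (T _ '' B (l s) ∩ B (l s)) := by gcongr

/-- The pigeonhole step in the proof that exact finite-rank transformations are
partially rigid: a return time `m` which is a sum of at most `k` tower heights with
`μ(T^m B ∩ B) ≥ μ(B_{j₀})/k^k` for some tower base `B`. -/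
theorem stmt3 {X : Type*} [MeasurableSpace X] (μ : Measure X) [IsProbabilityMeasure μ]
    (T : ℤ → X → X) (hmp : ∀ g, MeasurePreserving (T g) μ μ)
    (hadd : ∀ g h x, T (g + h) x = T g (T h x)) (hzero : ∀ x, T 0 x = x)
    (k : ℕ) (hk : 1 ≤ k)
    (B : Fin k → Set X) (hBmeas : ∀ j, MeasurableSet (B j))
    (hgt : Fin k → ℕ) (hpos : ∀ j, 0 < hgt j)
    (hdisj : ∀ (j j' : Fin k) (i i' : ℕ), i < hgt j → i' < hgt j' →
      (j, i) ≠ (j', i') → μ (T (i:ℤ) '' B j ∩ T (i':ℤ) '' B j') = 0)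
    (hfill : μ (Set.univ \ ⋃ j, ⋃ i ∈ Finset.range (hgt j), T (i:ℤ) '' B j) = 0)
    (hret : ∀ j, μ ((T (hgt j : ℤ) '' B j) \ ⋃ l, B l) = 0) :
    ∃ j₀ : Fin k, (∀ j, μ (B j) ≤ μ (B j₀)) ∧
      ∃ (jstar : Fin k) (m : ℕ), 0 < m ∧
        (∃ (b : ℕ), b ≤ k ∧ ∃ c : Fin b → Fin k, m = ∑ i, hgt (c i)) ∧
        μ (B j₀) / (k : ℝ≥0∞) ^ k ≤ μ (T (m:ℤ) '' B jstar ∩ B jstar) :=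
  stmt3_general μ T hmp hadd hzero k hk B hBmeas hgt hpos hret
end

section
/- Let T be an invertible measure-preserving transformation of a probability space (X,μ), let A_n ⊆ X be measurable with μ(A_n) → δ ≥ 1/k for some integer k ≥ 1, let r_n be positive integers, and let B be a measurable set. Assume ∫_{A_n} (1_B∘T^{r_n} − 1_B)² dμ → 0 and, for every measurable set C, μ(C ∩ A_n) → δ·μ(C). Then liminf_n μ(T^{r_n} B ∩ B) ≥ (δ/2)·μ(B) ≥ μ(B)/(2k). -/
/-!
The square of `1_B ∘ T^{r_n} - 1_B` is the indicator of `T^{-r_n} B ∆ B`, so the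
hypothesis on the integrals says that `B ∩ A_n` is covered, up to a set of vanishing measure, by
`T^{-r_n} B ∩ B`. This set lies in `T^{-r_n} (T^{r_n} B ∩ B)`, whose measure is at most that of `T^{r_n} B ∩ B`,
hence `liminf μ(T^{r_n} B ∩ B) ≥ lim μ(B ∩ A_n) = δ μ(B)`, which is even better than `δ μ(B) / 2`.
-/

open MeasureTheory Filter Topology Set

lemma sq_indicator_one_sub_indicator_one {X : Type*} (s t : Set X) (x : X) :
    (s.indicator (fun _ => (1:ℝ)) x - t.indicator (fun _ => (1:ℝ)) x) ^ 2
      = (symmDiff s t).indicator 1 x := by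
  by_cases hs : x ∈ s <;> by_cases ht : x ∈ t <;> simp [hs, ht, mem_symmDiff]

section

variable {X : Type*} [MeasurableSpace X]

lemma setIntegral_sq_indicator_one_sub_indicator_one (μ : Measure X) {s t : Set X}
    (hs : MeasurableSet s) (ht : MeasurableSet t) (A : Set X) :
    ∫ x in A, (s.indicator (fun _ => (1:ℝ)) x - t.indicator (fun _ => (1:ℝ)) x) ^ 2 ∂μ
      = μ.real (symmDiff s t ∩ A) := by
  simp_rw [sq_indicator_one_sub_indicator_one]
  rw [integral_indicator_one (hs.symmDiff ht), measureReal_restrict_apply (hs.symmDiff ht)]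

lemma MeasureTheory.MeasurePreserving.measure_preimage_inter_le_image_inter {Y : Type*} [MeasurableSpace Y]
    {μ : Measure X} {ν : Measure Y} {g : X → Y} (hg : MeasurePreserving g μ ν)
    (s : Set Y) (t : Set X) : μ (g ⁻¹' s ∩ t) ≤ ν (g '' t ∩ s) :=
  calc μ (g ⁻¹' s ∩ t) ≤ μ (g ⁻¹' (g '' t ∩ s)) :=
        measure_mono fun _ ⟨hxs, hxt⟩ => ⟨mem_image_of_mem g hxt, hxs⟩
    _ ≤ μ.map g (g '' t ∩ s) := Measure.le_map_apply hg.measurable.aemeasurable _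
    _ = ν (g '' t ∩ s) := by rw [hg.map_eq]

lemma MeasureTheory.MeasurePreserving.measureReal_inter_sub_setIntegral_le {μ : Measure X} [IsFiniteMeasure μ]
    {g : X → X} (hg : MeasurePreserving g μ μ) {B : Set X} (hB : MeasurableSet B) (A : Set X) :
    μ.real (B ∩ A) - ∫ x in A,
      (B.indicator (fun _ => (1:ℝ)) (g x) - B.indicator (fun _ => (1:ℝ)) x) ^ 2 ∂μ
      ≤ μ.real (g '' B ∩ B) := by
  have hsq : ∫ x in A,
      (B.indicator (fun _ => (1:ℝ)) (g x) - B.indicator (fun _ => (1:ℝ)) x) ^ 2 ∂μ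
      = μ.real (symmDiff (g ⁻¹' B) B ∩ A) :=
    setIntegral_sq_indicator_one_sub_indicator_one μ (hg.measurable hB) hB A
  have hcover : B ∩ A ⊆ (g ⁻¹' B ∩ B) ∪ (symmDiff (g ⁻¹' B) B ∩ A) := by
    rintro x ⟨hxB, hxA⟩
    by_cases hgx : g x ∈ B
    · exact Or.inl ⟨hgx, hxB⟩
    · exact Or.inr ⟨Or.inr ⟨hxB, hgx⟩, hxA⟩
  have hrecur : μ.real (g ⁻¹' B ∩ B) ≤ μ.real (g '' B ∩ B) :=
    ENNReal.toReal_mono (measure_ne_top _ _) (hg.measure_preimage_inter_le_image_inter B B)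
  linarith [measureReal_mono (μ := μ) hcover,
    measureReal_union_le (μ := μ) (g ⁻¹' B ∩ B) (symmDiff (g ⁻¹' B) B ∩ A)]

end

lemma le_liminf_of_tendsto_of_le {u v : ℕ → ℝ} {a b : ℝ} (hu : Tendsto u atTop (𝓝 a))
    (huv : ∀ n, u n ≤ v n) (hvb : ∀ n, v n ≤ b) : a ≤ liminf v atTop :=
  hu.liminf_eq ▸ liminf_le_liminf (.of_forall huv) hu.isBoundedUnder_ge
    (isCoboundedUnder_ge_of_le atTop hvb)

theorem stmt5_general {X : Type*} [MeasurableSpace X] (μ : Measure X) [IsProbabilityMeasure μ]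
    (f : X → X) (hf : MeasurePreserving f μ μ)
    (k : ℕ) (δ : ℝ) (hδ : (1:ℝ)/k ≤ δ)
    (A : ℕ → Set X) (r : ℕ → ℕ) (B : Set X) (hB : MeasurableSet B)
    (hL2 : Tendsto (fun n => ∫ x in A n,
      (B.indicator (fun _ => (1:ℝ)) (f^[r n] x) - B.indicator (fun _ => (1:ℝ)) x) ^ 2 ∂μ)
      atTop (𝓝 0))
    (hmix : ∀ C : Set X, MeasurableSet C →
      Tendsto (fun n => (μ (C ∩ A n)).toReal) atTop (𝓝 (δ * (μ C).toReal))) :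
    δ / 2 * (μ B).toReal ≤ liminf (fun n => (μ (f^[r n] '' B ∩ B)).toReal) atTop ∧
      (μ B).toReal / (2 * k) ≤ δ / 2 * (μ B).toReal := by
  have hμB : 0 ≤ μ.real B := measureReal_nonneg
  have hδ₀ : 0 ≤ δ := (by positivity : (0:ℝ) ≤ 1 / k).trans hδ
  refine ⟨?_, ?_⟩
  · have hlim := (hmix B hB).sub hL2
    rw [sub_zero] at hlim
    calc δ / 2 * μ.real B ≤ δ * μ.real B := by nlinarith
      _ ≤ _ := le_liminf_of_tendsto_of_le hlim
          (fun n => (hf.iterate (r n)).measureReal_inter_sub_setIntegral_le hB (A n))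
          (fun _ => measureReal_le_one)
  · calc μ.real B / (2 * k) = (1 / k) / 2 * μ.real B := by ring
      _ ≤ δ / 2 * μ.real B := by gcongr

/-- The key computation in the proof that ergodic IETs are partially rigid
(Proposition 6.8). -/
theorem stmt5 {X : Type*} [MeasurableSpace X] (μ : Measure X) [IsProbabilityMeasure μ]
    (f : X → X) (hf : MeasurePreserving f μ μ) (hbij : Function.Bijective f)
    (k : ℕ) (hk : 1 ≤ k) (δ : ℝ) (hδ : (1:ℝ)/k ≤ δ)
    (A : ℕ → Set X) (hA : ∀ n, MeasurableSet (A n))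
    (r : ℕ → ℕ) (hr : ∀ n, 0 < r n)
    (B : Set X) (hB : MeasurableSet B)
    (hAδ : Tendsto (fun n => (μ (A n)).toReal) atTop (𝓝 δ))
    (hL2 : Tendsto (fun n => ∫ x in A n,
      (B.indicator (fun _ => (1:ℝ)) (f^[r n] x) - B.indicator (fun _ => (1:ℝ)) x) ^ 2 ∂μ)
      atTop (𝓝 0))
    (hmix : ∀ C : Set X, MeasurableSet C →
      Tendsto (fun n => (μ (C ∩ A n)).toReal) atTop (𝓝 (δ * (μ C).toReal))) :
    δ / 2 * (μ B).toReal ≤ liminf (fun n => (μ (f^[r n] '' B ∩ B)).toReal) atTop ∧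
      (μ B).toReal / (2 * k) ≤ δ / 2 * (μ B).toReal :=
  stmt5_general μ f hf k δ hδ A r B hB hL2 hmix
end

section
/- Let G be a countable group with finite subsets (F_n)_{n≥0}, (C_n)_{n≥1} satisfying F_n C_{n+1} ⊆ F_{n+1} and F_n c ∩ F_n c' = ∅ for distinct c,c' ∈ C_{n+1}. Fix n ≥ 0 and g ∈ G. If for every x = (f, c_{n+1}, c_{n+2}, …) ∈ F_n × C_{n+1} × C_{n+2} × ⋯ there exists m > n with g f c_{n+1} ⋯ c_m ∈ F_m, then there exists a single m > n such that g·F_n·C_{n+1}·C_{n+2}⋯C_m ⊆ F_m. -/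
open Filter Topology Pointwise

/-- The (ordered) word `c_{n+1} c_{n+2} ⋯ c_{n+k}` in a monoid. -/
def cfWord {G : Type*} [Monoid G] (c : ℕ → G) (n : ℕ) : ℕ → G
  | 0 => 1
  | k + 1 => cfWord c n k * c (n + k + 1)

lemma cfWord_congr {G : Type*} [Monoid G] (c c' : ℕ → G) (n k : ℕ)
    (h : ∀ i < k, c (n + i + 1) = c' (n + i + 1)) :
    cfWord c n k = cfWord c' n k := by
  induction k with
  | zero => rfl
  | succ k ih =>
    simp only [cfWord]
    rw [ih (fun i hi => h i (by omega)), h k (by omega)]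

/-- Proposition 1.2 (compactness step): if for every point of
`F_n × C_{n+1} × C_{n+2} × ⋯` some finite product lands in some `F_m`, then a single
`m` works uniformly, i.e. `g·F_n·C_{n+1}⋯C_m ⊆ F_m`. -/
theorem stmt7 {G : Type*} [Group G] [DecidableEq G]
    (F : ℕ → Finset G) (C : ℕ → Finset G)
    (hFC : ∀ n, F n * C (n+1) ⊆ F (n+1))
    (hdisj : ∀ n, ∀ c ∈ C (n+1), ∀ c' ∈ C (n+1), c ≠ c' →
      Disjoint (F n * {c}) (F n * {c'}))
    (n : ℕ) (g : G)
    (hpt : ∀ f ∈ F n, ∀ c : ℕ → G, (∀ j, c j ∈ C j) →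
      ∃ m, n < m ∧ g * f * cfWord c n (m - n) ∈ F m) :
    ∃ m, n < m ∧ ∀ f ∈ F n, ∀ c : ℕ → G, (∀ j, c j ∈ C j) →
      g * f * cfWord c n (m - n) ∈ F m := by
  classical
  -- monotonicity: once in `F m`, always in `F m'` for `m' ≥ m`
  have mono : ∀ f, ∀ c : ℕ → G, (∀ j, c j ∈ C j) → ∀ m, n < m →
      g * f * cfWord c n (m - n) ∈ F m → ∀ m', m ≤ m' →
      g * f * cfWord c n (m' - n) ∈ F m' := by
    intro f c hc m hm hmem m' hm'
    induction m' with
    | zero => omega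
    | succ m' ih =>
      rcases Nat.lt_or_ge m' m with h | h
      · have : m = m' + 1 := by omega
        exact this ▸ hmem
      · have hstep := ih (by omega)
        have e : m' + 1 - n = (m' - n) + 1 := by omega
        have e2 : n + (m' - n) + 1 = m' + 1 := by omega
        rw [e]
        show g * f * (cfWord c n (m' - n) * c (n + (m' - n) + 1)) ∈ F (m' + 1)
        rw [← mul_assoc]
        refine hFC m' (Finset.mul_mem_mul hstep ?_)
        rw [e2]; exact hc (m' + 1)
  by_contra hcon
  push_neg at hcon
  -- witnesses: for each k, a bad point at level n+1+k
  choose f' hf' c' hc' hbad using fun k => hcon (n + 1 + k) (by omega)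
  set U : Ultrafilter ℕ := Ultrafilter.of (atTop : Filter ℕ) with hU
  have hUle : (U : Filter ℕ) ≤ atTop := Ultrafilter.of_le atTop
  -- pigeonhole in the ultrafilter over a finite set
  have pigeon : ∀ (S : Finset G) (h : ℕ → G), (∀ k, h k ∈ S) →
      ∃ a ∈ S, {k | h k = a} ∈ U := by
    intro S h hh
    have hmem : (⋃ a ∈ (S : Set G), {k | h k = a}) ∈ U := by
      have : (⋃ a ∈ (S : Set G), {k | h k = a}) = Set.univ := by
        ext k; simp only [Set.mem_iUnion, Set.mem_setOf_eq, Set.mem_univ, iff_true]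
        exact ⟨h k, hh k, rfl⟩
      rw [this]; exact Filter.univ_mem
    rcases (Ultrafilter.finite_biUnion_mem_iff S.finite_toSet).mp hmem with ⟨a, haS, haU⟩
    exact ⟨a, haS, haU⟩
  obtain ⟨f, hf, hfU⟩ := pigeon (F n) f' hf'
  choose a ha haU using fun j => pigeon (C j) (fun k => c' k j) (fun k => hc' k j)
  obtain ⟨m, hm, hgood⟩ := hpt f hf a ha
  -- find a single index k agreeing with the limit point up to level m, with n+1+k ≥ m
  have s2 : (⋂ j ∈ Finset.range (m + 1), {k | c' k j = a j}) ∈ U :=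
    (Filter.biInter_finset_mem _).mpr fun j _ => haU j
  have s3 : {k | m ≤ n + 1 + k} ∈ U :=
    hUle (Filter.eventually_atTop.mpr ⟨m, fun k hk => by omega⟩)
  obtain ⟨k, hk⟩ := Filter.nonempty_of_mem
    (Filter.inter_mem (Filter.inter_mem hfU s2) s3)
  obtain ⟨⟨hk1, hk2⟩, hk3⟩ := hk
  simp only [Set.mem_iInter, Set.mem_setOf_eq, Finset.mem_range] at hk1 hk2 hk3
  -- the witness is good at level m (it agrees with the limit point there)
  have hgood' : g * f' k * cfWord (c' k) n (m - n) ∈ F m := by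
    rw [hk1, cfWord_congr (c' k) a n (m - n) (fun i hi => hk2 (n + i + 1) (by omega))]
    exact hgood
  -- hence good at level n+1+k, contradicting badness
  exact hbad k (mono (f' k) (c' k) (hc' k) m hm hgood' (n + 1 + k) hk3)
end

section
/- Let (r_n)_{n≥1} be a sequence of k×k matrices with strictly positive integer entries. Suppose there exist nonnegative reals Λ_1,…,Λ_k and a subsequence n_p → ∞ such that for all i,l ∈ {1,…,k}, r_{n_p}^{i,l} / (Σ_{j=1}^k r_{n_p}^{j,l}) → Λ_i as p → ∞. Then the intersections of the cones r_{n_p}(ℝ₊^k) with the simplex Δ = {z ∈ ℝ₊^k : z_1+⋯+z_k = 1} converge in Hausdorff distance to the single point (Λ_1,…,Λ_k). -/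
/-!
If the column sums `s_l` of `A` are positive, then every `z = A v` with `v ≥ 0` and
`∑ z_i = 1` is the convex combination `∑ (v_l s_l) c_l` of the normalized columns
`c_l = A e_l / s_l`. Hence the cone `A(ℝ₊^k)` meets the simplex inside the convex hull of
the `c_l`, which lies in every ball around `Λ` containing all the `c_l`. When the
normalized columns converge to `Λ`, these radii go to `0`.
-/

open Filter Topology

namespace Matrix

variable {m n : Type*} [Fintype m] [Fintype n]

noncomputable def normalizedCol (A : Matrix m n ℝ) (l : n) : m → ℝ :=
  fun i => A i l / ∑ j, A j l

theorem sum_mulVec_apply (A : Matrix m n ℝ) (v : n → ℝ) :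
    ∑ i, (A *ᵥ v) i = ∑ l, v l * ∑ j, A j l := by
  simp only [mulVec, dotProduct, Finset.mul_sum]
  rw [Finset.sum_comm]
  simp_rw [mul_comm]

theorem mulVec_eq_sum_smul_normalizedCol (A : Matrix m n ℝ) (hA : ∀ l, ∑ j, A j l ≠ 0)
    (v : n → ℝ) : A *ᵥ v = ∑ l, (v l * ∑ j, A j l) • A.normalizedCol l := by
  ext i
  simp only [mulVec, dotProduct, normalizedCol, Finset.sum_apply, Pi.smul_apply, smul_eq_mul]
  refine Finset.sum_congr rfl fun l _ => ?_
  field_simp [hA l]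

theorem mulVec_mem_convexHull_normalizedCol (A : Matrix m n ℝ) (hA : ∀ l, 0 < ∑ j, A j l)
    {v : n → ℝ} (hv : ∀ l, 0 ≤ v l) (h1 : ∑ i, (A *ᵥ v) i = 1) :
    A *ᵥ v ∈ convexHull ℝ (Set.range A.normalizedCol) := by
  rw [A.mulVec_eq_sum_smul_normalizedCol fun l => (hA l).ne']
  refine (convex_convexHull ℝ _).sum_mem (fun l _ => mul_nonneg (hv l) (hA l).le) ?_
    fun l _ => subset_convexHull ℝ _ (Set.mem_range_self l)
  rwa [← sum_mulVec_apply]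

end Matrix

theorem Metric.hausdorffDist_singleton_le_of_subset_closedBall {α : Type*} [PseudoMetricSpace α]
    {s : Set α} {x : α} {r : ℝ} (hr : 0 ≤ r) (hs : s ⊆ Metric.closedBall x r) :
    Metric.hausdorffDist s {x} ≤ r := by
  rcases s.eq_empty_or_nonempty with rfl | ⟨y, hy⟩
  · simpa using hr
  refine Metric.hausdorffDist_le_of_mem_dist hr (fun z hz => ⟨x, rfl, hs hz⟩) ?_
  rintro _ rfl
  exact ⟨y, hy, by rw [dist_comm]; exact hs hy⟩

theorem Matrix.hausdorffDist_cone_inter_simplex_le {m n : Type*} [Fintype m] [Fintype n]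
    (A : Matrix m n ℝ) (hA : ∀ l, 0 < ∑ j, A j l) (x : m → ℝ) :
    Metric.hausdorffDist
      {z : m → ℝ | (∃ v : n → ℝ, (∀ i, 0 ≤ v i) ∧ z = A.mulVec v) ∧ (∀ i, 0 ≤ z i) ∧ ∑ i, z i = 1}
      {x} ≤ ∑ l, dist (A.normalizedCol l) x := by
  refine Metric.hausdorffDist_singleton_le_of_subset_closedBall
    (Finset.sum_nonneg fun l _ => dist_nonneg) ?_
  rintro _ ⟨⟨v, hv, rfl⟩, -, h1⟩
  refine (convex_closedBall x _).convexHull_subset_iff.2 ?_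
    (A.mulVec_mem_convexHull_normalizedCol hA hv h1)
  rintro _ ⟨l, rfl⟩
  exact Finset.single_le_sum (f := fun l => dist (A.normalizedCol l) x)
    (fun l _ => dist_nonneg) (Finset.mem_univ l)

theorem stmt8_general (k : ℕ) (r : ℕ → Matrix (Fin k) (Fin k) ℝ)
    (hint : ∀ n i l, ∃ z : ℕ, 0 < z ∧ r n i l = z)
    (Λ : Fin k → ℝ)
    (np : ℕ → ℕ)
    (hconv : ∀ i l, Tendsto (fun p => r (np p) i l / ∑ j, r (np p) j l) atTop (𝓝 (Λ i))) :
    Tendsto (fun p => Metric.hausdorffDist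
      {z : Fin k → ℝ | (∃ v : Fin k → ℝ, (∀ i, 0 ≤ v i) ∧ z = (r (np p)).mulVec v) ∧
        (∀ i, 0 ≤ z i) ∧ ∑ i, z i = 1}
      {Λ}) atTop (𝓝 0) := by
  have hcolsum : ∀ n l, 0 < ∑ j, r n j l := fun n l =>
    Finset.sum_pos (fun j _ => by obtain ⟨z, hz, he⟩ := hint n j l; rw [he]; exact_mod_cast hz)
      ⟨l, Finset.mem_univ l⟩
  have hcol : ∀ l, Tendsto (fun p => (r (np p)).normalizedCol l) atTop (𝓝 Λ) := fun l =>
    tendsto_pi_nhds.2 fun i => hconv i l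
  have hdist : Tendsto (fun p => ∑ l, dist ((r (np p)).normalizedCol l) Λ) atTop (𝓝 0) := by
    simpa using tendsto_finsetSum Finset.univ fun l _ => (hcol l).dist (tendsto_const_nhds (x := Λ))
  exact squeeze_zero (fun p => Metric.hausdorffDist_nonneg)
    (fun p => (r (np p)).hausdorffDist_cone_inter_simplex_le (hcolsum _) Λ) hdist

/-- Proposition 4.3 (geometric core): if the normalized columns of the positive
integer matrices `r_{n_p}` converge to `(Λ_1,…,Λ_k)`, then the intersections of the
cones `r_{n_p}(ℝ₊^k)` with the unit simplex converge in Hausdorff distance to the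
single point `(Λ_1,…,Λ_k)`. -/
theorem stmt8 (k : ℕ) (hk : 0 < k) (r : ℕ → Matrix (Fin k) (Fin k) ℝ)
    (hint : ∀ n i l, ∃ z : ℕ, 0 < z ∧ r n i l = z)
    (Λ : Fin k → ℝ) (hΛ : ∀ i, 0 ≤ Λ i)
    (np : ℕ → ℕ) (hnp : StrictMono np)
    (hconv : ∀ i l, Tendsto (fun p => r (np p) i l / ∑ j, r (np p) j l) atTop (𝓝 (Λ i))) :
    Tendsto (fun p => Metric.hausdorffDist
      {z : Fin k → ℝ | (∃ v : Fin k → ℝ, (∀ i, 0 ≤ v i) ∧ z = (r (np p)).mulVec v) ∧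
        (∀ i, 0 ≤ z i) ∧ ∑ i, z i = 1}
      {Λ}) atTop (𝓝 0) :=
  stmt8_general k r hint Λ np hconv
end

section
/- Let T be a rank-one infinite measure preserving (C,F) transformation of ℤ: X is the (C,F)-space built from F_n = {0,…,h_n−1} ⊆ ℤ and cut sets C_n ⊆ ℤ, with invariant measure μ normalized by μ([0]_0) = 1. Then for arbitrary measurable subsets A, B ⊆ [0]_0, Σ_{k=0}^{h_l−1} μ(A ∩ T_k B) ≤ 2·min(μ(A), μ(B)) · Σ_{k=0}^{h_l−1} μ([0]_0 ∩ T_k [0]_0) for every l ≥ 1. -/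
open MeasureTheory Finset
open scoped ENNReal

/-!
Write `[0]_0 = ⋃_{c ∈ C} T_c V₀`. For each `c` the levels `T_{c+k} V₀`, `k < h`, of the tower over
`V₀` are disjoint, so each of the `#C` columns contributes at most `μ A` to
`∑_k μ (A ∩ T_k B)`; by invariance, `μ (A ∩ T_k B) = μ (B ∩ T_{-k} A)` gives the bound `#C · μ B`
as well. Conversely, for `c' ∈ C` every level `T_c V₀ ⊆ [0]_0` with `c' ≤ c` lies in the column
over `T_{c'} V₀`, so `∑_k μ ([0]_0 ∩ T_k [0]_0) ≥ ∑_{c' ∈ C} #{c ∈ C | c' ≤ c} / #C = (#C + 1) / 2`.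
-/

theorem Finset.two_mul_sum_card_filter_le {α : Type*} [LinearOrder α] (s : Finset α) :
    2 * ∑ a ∈ s, #{b ∈ s | a ≤ b} = #s * (#s + 1) := by
  have hsplit : ∀ a ∈ s, #{b ∈ s | a ≤ b} + #{b ∈ s | b ≤ a} = #s + 1 := by
    intro a ha
    have hunion : {b ∈ s | a ≤ b} ∪ {b ∈ s | b ≤ a} = s := by
      ext b
      simp only [mem_union, mem_filter, ← and_or_left, le_total, and_true]
    have hinter : {b ∈ s | a ≤ b} ∩ {b ∈ s | b ≤ a} = {a} := by
      ext b; simp only [mem_inter, mem_filter, mem_singleton]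
      exact ⟨fun h => le_antisymm h.2.2 h.1.2, by rintro rfl; exact ⟨⟨ha, le_rfl⟩, ha, le_rfl⟩⟩
    rw [← card_union_add_card_inter, hunion, hinter, card_singleton]
  have hswap : ∑ a ∈ s, #{b ∈ s | b ≤ a} = ∑ a ∈ s, #{b ∈ s | a ≤ b} := by
    simp only [card_filter]
    exact sum_comm
  calc 2 * ∑ a ∈ s, #{b ∈ s | a ≤ b}
      = ∑ a ∈ s, (#{b ∈ s | a ≤ b} + #{b ∈ s | b ≤ a}) := by
        rw [sum_add_distrib, hswap, two_mul]
    _ = #s * (#s + 1) := by rw [sum_congr rfl hsplit, sum_const, smul_eq_mul]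

namespace MeasureTheory

variable {X ι κ : Type*} [MeasurableSpace X] (μ : Measure X)

theorem measure_inter_biUnion_finset {s : Finset ι} {E : ι → Set X}
    (hd : (s : Set ι).PairwiseDisjoint E) (hE : ∀ i ∈ s, MeasurableSet (E i)) (A : Set X) :
    μ (A ∩ ⋃ i ∈ s, E i) = ∑ i ∈ s, μ (A ∩ E i) := by
  have hrestrict := measure_biUnion_finset (μ := μ.restrict A) hd hE
  rw [Measure.restrict_apply (s.measurableSet_biUnion hE)] at hrestrict
  rw [Set.inter_comm, hrestrict]
  exact sum_congr rfl fun i hi => by rw [Measure.restrict_apply (hE i hi), Set.inter_comm]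

theorem sum_measure_inter_le_card_mul (A : Set X) {s : Finset ι} {C : Finset κ}
    {F : ι → Set X} {W : κ → ι → Set X} (hF : ∀ i ∈ s, F i ⊆ ⋃ c ∈ C, W c i)
    (hd : ∀ c ∈ C, (s : Set ι).PairwiseDisjoint (W c))
    (hW : ∀ c ∈ C, ∀ i ∈ s, MeasurableSet (W c i)) :
    ∑ i ∈ s, μ (A ∩ F i) ≤ #C * μ A :=
  calc ∑ i ∈ s, μ (A ∩ F i) ≤ ∑ i ∈ s, ∑ c ∈ C, μ (A ∩ W c i) := by
        refine sum_le_sum fun i hi => (measure_mono ?_).trans (measure_biUnion_finset_le C _)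
        rw [← Set.inter_iUnion₂]
        exact Set.inter_subset_inter_right A (hF i hi)
    _ = ∑ c ∈ C, μ (A ∩ ⋃ i ∈ s, W c i) := by
        rw [sum_comm]
        exact sum_congr rfl fun c hc => (measure_inter_biUnion_finset μ (hd c hc) (hW c hc) A).symm
    _ ≤ ∑ _c ∈ C, μ A := sum_le_sum fun c _ => measure_mono Set.inter_subset_left
    _ = #C * μ A := by rw [sum_const, nsmul_eq_mul]

end MeasureTheory

structure IsAddAction {G X : Type*} [AddGroup G] (T : G → X → X) : Prop where
  map_add : ∀ g h x, T (g + h) x = T g (T h x)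
  map_zero : ∀ x, T 0 x = x

namespace IsAddAction

variable {G X : Type*} {T : G → X → X}

section AddGroup

variable [AddGroup G]

theorem image_add (hT : IsAddAction T) (g h : G) (S : Set X) :
    T (g + h) '' S = T g '' (T h '' S) := by
  rw [← Set.image_comp]
  exact Set.image_congr' (hT.map_add g h)

theorem leftInverse_neg (hT : IsAddAction T) (g : G) : Function.LeftInverse (T (-g)) (T g) :=
  fun x => by rw [← hT.map_add, neg_add_cancel, hT.map_zero]

theorem rightInverse_neg (hT : IsAddAction T) (g : G) : Function.RightInverse (T (-g)) (T g) :=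
  fun x => by rw [← hT.map_add, add_neg_cancel, hT.map_zero]

theorem injective (hT : IsAddAction T) (g : G) : Function.Injective (T g) :=
  (hT.leftInverse_neg g).injective

theorem image_eq_preimage_neg (hT : IsAddAction T) (g : G) (S : Set X) :
    T g '' S = T (-g) ⁻¹' S := by
  rw [Set.image_eq_preimage_of_inverse (hT.leftInverse_neg g) (hT.rightInverse_neg g)]

theorem image_inter_image_neg (hT : IsAddAction T) (g : G) (A B : Set X) :
    T (-g) '' (A ∩ T g '' B) = B ∩ T (-g) '' A := by
  rw [Set.image_inter (hT.injective _), ← hT.image_add, neg_add_cancel,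
    Set.image_congr' hT.map_zero, Set.image_id', Set.inter_comm]

theorem disjoint_image_add_left (hT : IsAddAction T) {S : Set X} {a b : G}
    (hab : Disjoint (T a '' S) (T b '' S)) (g : G) :
    Disjoint (T (g + a) '' S) (T (g + b) '' S) := by
  rw [hT.image_add, hT.image_add]
  exact (Set.disjoint_image_iff (hT.injective g)).2 hab

theorem image_biUnion_image {ι : Type*} (hT : IsAddAction T) (g : G) (s : Finset ι) (f : ι → G)
    (V : Set X) : T g '' ⋃ i ∈ s, T (f i) '' V = ⋃ i ∈ s, T (g + f i) '' V := by
  simp only [Set.image_iUnion₂, hT.image_add]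

variable [MeasurableSpace X] {μ : Measure X}

theorem measurableSet_image (hT : IsAddAction T) (hmeas : ∀ g, Measurable (T g)) (g : G)
    {S : Set X} (hS : MeasurableSet S) : MeasurableSet (T g '' S) := by
  rw [hT.image_eq_preimage_neg]
  exact hmeas (-g) hS

theorem measure_inter_image_comm (hT : IsAddAction T) (hmp : ∀ g, MeasurePreserving (T g) μ μ)
    (g : G) {A B : Set X} (hA : MeasurableSet A) (hB : MeasurableSet B) :
    μ (A ∩ T g '' B) = μ (B ∩ T (-g) '' A) := by
  have hAB := hA.inter (hT.measurableSet_image (fun g => (hmp g).measurable) g hB)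
  rw [← hT.image_inter_image_neg, hT.image_eq_preimage_neg (-g) (A ∩ T g '' B), neg_neg,
    (hmp g).measure_preimage hAB.nullMeasurableSet]

end AddGroup

section AddCommGroup

variable [AddCommGroup G]

theorem disjoint_image_neg (hT : IsAddAction T) {S : Set X} {a b : G}
    (hab : Disjoint (T a '' S) (T b '' S)) : Disjoint (T (-a) '' S) (T (-b) '' S) := by
  -- `-a = (-a - b) + b` and `-b = (-a - b) + a`
  convert hT.disjoint_image_add_left hab.symm (-a - b) using 3 <;> abel

variable [MeasurableSpace X] {μ : Measure X}

theorem sum_measure_inter_image_le_card_mul {ι : Type*} (hT : IsAddAction T)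
    (hmeas : ∀ g, Measurable (T g)) {V : Set X} (hV : MeasurableSet V) {s : Finset ι}
    {ε : ι → G} (hε : (s : Set ι).PairwiseDisjoint fun i => T (ε i) '' V) (C : Finset G)
    {B : Set X} (hB : B ⊆ ⋃ c ∈ C, T c '' V) (A : Set X) :
    ∑ i ∈ s, μ (A ∩ T (ε i) '' B) ≤ #C * μ A := by
  refine sum_measure_inter_le_card_mul μ A (W := fun c i => T (ε i + c) '' V) (fun i _ => ?_)
    (fun c _ i hi j hj hij => ?_) fun c _ i _ => hT.measurableSet_image hmeas _ hV
  · have := Set.image_mono (f := T (ε i)) hB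
    rwa [hT.image_biUnion_image (ε i) C (fun c => c) V] at this
  · simp only [add_comm _ c]
    exact hT.disjoint_image_add_left (hε hi hj hij) c

end AddCommGroup

end IsAddAction

section Tower

variable {X : Type*} [MeasurableSpace X] {μ : Measure X} {T : ℤ → X → X} {V : Set X}
  {C : Finset ℤ} {h : ℕ}

theorem IsAddAction.sum_measure_biUnion_inter_image_biUnion (hT : IsAddAction T)
    (hmeas : ∀ g, Measurable (T g)) (hV : MeasurableSet V)
    (hC : (C : Set ℤ).PairwiseDisjoint fun c => T c '' V) (s : Finset ℕ) :
    ∑ k ∈ s, μ ((⋃ c ∈ C, T c '' V) ∩ T k '' ⋃ c ∈ C, T c '' V) =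
      ∑ c ∈ C, ∑ k ∈ s, μ ((⋃ c ∈ C, T c '' V) ∩ T (c + k) '' V) := by
  rw [sum_comm]
  refine sum_congr rfl fun k _ => ?_
  rw [hT.image_biUnion_image k C (fun c => c) V]
  rw [measure_inter_biUnion_finset μ (fun c hc c' hc' hcc' => ?_)
    fun c _ => hT.measurableSet_image hmeas _ hV]
  · simp only [add_comm (k : ℤ)]
  · exact hT.disjoint_image_add_left (hC hc hc' hcc') k

theorem IsAddAction.sum_measure_le_sum_measure_inter_image_add (hT : IsAddAction T)
    (hmeas : ∀ g, Measurable (T g)) (hV : MeasurableSet V)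
    (hC : (C : Set ℤ).PairwiseDisjoint fun c => T c '' V)
    (hlevels : (range h : Set ℕ).PairwiseDisjoint fun k => T k '' V)
    (htower : ∀ c ∈ C, ∀ c' ∈ C, c' ≤ c → T (c - c') '' V ⊆ ⋃ k ∈ range h, T k '' V)
    {c' : ℤ} (hc' : c' ∈ C) :
    ∑ c ∈ C with c' ≤ c, μ (T c '' V) ≤
      ∑ k ∈ range h, μ ((⋃ c ∈ C, T c '' V) ∩ T (c' + k) '' V) := by
  have hsub : ⋃ c ∈ C.filter (c' ≤ ·), T c '' V ⊆
      (⋃ c ∈ C, T c '' V) ∩ ⋃ k ∈ range h, T (c' + k) '' V := by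
    refine Set.iUnion₂_subset fun c hc => ?_
    obtain ⟨hcC, hle⟩ := mem_filter.mp hc
    refine Set.subset_inter (Set.subset_biUnion_of_mem (u := fun c => T c '' V) hcC) ?_
    rw [← hT.image_biUnion_image c' (range h) (fun k => (k : ℤ)) V, ← add_sub_cancel c' c,
      hT.image_add]
    exact Set.image_mono (htower c hcC c' hc' hle)
  rw [← measure_biUnion_finset (hC.subset (coe_subset.mpr (filter_subset _ _)))
      fun c _ => hT.measurableSet_image hmeas c hV,
    ← measure_inter_biUnion_finset μ (fun i hi j hj hij => ?_)
      fun k _ => hT.measurableSet_image hmeas _ hV]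
  · exact measure_mono hsub
  · exact hT.disjoint_image_add_left (hlevels hi hj hij) c'

theorem IsAddAction.card_add_one_le_two_mul_sum_measure_inter_image (hT : IsAddAction T)
    (hmeas : ∀ g, Measurable (T g)) (hV : MeasurableSet V) (hCne : C.Nonempty)
    (hC : (C : Set ℤ).PairwiseDisjoint fun c => T c '' V)
    (hlevel : ∀ c ∈ C, μ (T c '' V) = 1 / #C)
    (hlevels : (range h : Set ℕ).PairwiseDisjoint fun k => T k '' V)
    (htower : ∀ c ∈ C, ∀ c' ∈ C, c' ≤ c → T (c - c') '' V ⊆ ⋃ k ∈ range h, T k '' V) :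
    (#C + 1 : ℝ≥0∞) ≤
      2 * ∑ k ∈ range h, μ ((⋃ c ∈ C, T c '' V) ∩ T k '' ⋃ c ∈ C, T c '' V) := by
  have hinner : ∀ c' : ℤ, ∑ c ∈ C with c' ≤ c, μ (T c '' V) = #{c ∈ C | c' ≤ c} * (#C : ℝ≥0∞)⁻¹ :=
    fun c' => by
      rw [sum_congr rfl fun c hc => hlevel c (mem_filter.mp hc).1, sum_const, nsmul_eq_mul,
        one_div]
  have hcount : 2 * ∑ c' ∈ C, ((#{c ∈ C | c' ≤ c} : ℕ) : ℝ≥0∞) = #C * (#C + 1) := by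
    exact_mod_cast C.two_mul_sum_card_filter_le
  have hcard : (#C : ℝ≥0∞) * (#C : ℝ≥0∞)⁻¹ = 1 :=
    ENNReal.mul_inv_cancel (Nat.cast_ne_zero.mpr hCne.card_pos.ne') (ENNReal.natCast_ne_top _)
  calc (#C + 1 : ℝ≥0∞) = 2 * ∑ c' ∈ C, ∑ c ∈ C with c' ≤ c, μ (T c '' V) := by
        simp only [hinner, ← sum_mul, ← mul_assoc, hcount]
        rw [mul_comm (#C : ℝ≥0∞), mul_assoc, hcard, mul_one]
    _ ≤ 2 * ∑ c' ∈ C, ∑ k ∈ range h, μ ((⋃ c ∈ C, T c '' V) ∩ T (c' + k) '' V) := by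
        gcongr with c' hc'
        exact hT.sum_measure_le_sum_measure_inter_image_add hmeas hV hC hlevels htower hc'
    _ = _ := by rw [hT.sum_measure_biUnion_inter_image_biUnion hmeas hV hC]

end Tower

theorem stmt10_general {X : Type*} [MeasurableSpace X] (μ : Measure X)
    (T : ℤ → X → X) (hmp : ∀ g, MeasurePreserving (T g) μ μ)
    (hadd : ∀ g h x, T (g + h) x = T g (T h x)) (hzero : ∀ x, T 0 x = x)
    (Y V₀ : Set X) (hV₀ : MeasurableSet V₀)
    (C : Finset ℤ) (hCne : C.Nonempty)
    (h : ℕ)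
    (hbase : Y = ⋃ c ∈ C, T c '' V₀)
    (hdisjC : ∀ c ∈ C, ∀ c' ∈ C, c ≠ c' → Disjoint (T c '' V₀) (T c' '' V₀))
    (hlevel : ∀ c ∈ C, μ (T c '' V₀) = 1 / (C.card : ℝ≥0∞))
    (htowerdisj : ∀ i j : ℕ, i < h → j < h → i ≠ j →
      Disjoint (T (i:ℤ) '' V₀) (T (j:ℤ) '' V₀))
    (htower : ∀ c ∈ C, ∀ c' ∈ C, c' ≤ c →
      T (c - c') '' V₀ ⊆ ⋃ i ∈ Finset.range h, T (i:ℤ) '' V₀) :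
    ∀ A B : Set X, A ⊆ Y → B ⊆ Y → MeasurableSet A → MeasurableSet B →
      ∑ k ∈ Finset.range h, μ (A ∩ T (k:ℤ) '' B) ≤
        2 * min (μ A) (μ B) * ∑ k ∈ Finset.range h, μ (Y ∩ T (k:ℤ) '' Y) := by
  intro A B hAY hBY hA hB
  subst hbase
  have hT : IsAddAction T := ⟨hadd, hzero⟩
  have hmeas : ∀ g, Measurable (T g) := fun g => (hmp g).measurable
  have hlevels : (range h : Set ℕ).PairwiseDisjoint fun k => T k '' V₀ := fun i hi j hj hij =>
    htowerdisj i j (mem_range.mp hi) (mem_range.mp hj) hij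
  have hboundA : ∑ k ∈ range h, μ (A ∩ T k '' B) ≤ #C * μ A :=
    hT.sum_measure_inter_image_le_card_mul hmeas hV₀ hlevels C hBY A
  have hboundB : ∑ k ∈ range h, μ (A ∩ T k '' B) ≤ #C * μ B :=
    calc ∑ k ∈ range h, μ (A ∩ T k '' B) = ∑ k ∈ range h, μ (B ∩ T (-k) '' A) :=
          sum_congr rfl fun k _ => hT.measure_inter_image_comm hmp k hA hB
      _ ≤ #C * μ B := hT.sum_measure_inter_image_le_card_mul hmeas hV₀
          (fun i hi j hj hij => hT.disjoint_image_neg (hlevels hi hj hij)) C hAY B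
  have hcorr := hT.card_add_one_le_two_mul_sum_measure_inter_image hmeas hV₀ hCne
    (fun c hc c' hc' hcc' => hdisjC c hc c' hc' hcc') hlevel hlevels htower
  calc ∑ k ∈ range h, μ (A ∩ T k '' B) ≤ #C * min (μ A) (μ B) := by
        rw [← min_mul_mul_left]
        exact le_min hboundA hboundB
    _ ≤ (#C + 1) * min (μ A) (μ B) := by gcongr; exact le_self_add
    _ ≤ 2 * _ * min (μ A) (μ B) := by gcongr
    _ = _ := by ring

/-- Lemma 2.3: for a rank-one infinite measure preserving (C,F) transformation with
base `Y = [0]_0` of measure `1`, level-index set `C` at stage `l` and height `h = h_l`,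
the correlation sums of arbitrary subsets of the base are dominated by twice the
minimum of the measures times the correlation sums of the base. -/
theorem stmt10 {X : Type*} [MeasurableSpace X] (μ : Measure X) [SigmaFinite μ]
    (hinf : μ Set.univ = ⊤)
    (T : ℤ → X → X) (hmp : ∀ g, MeasurePreserving (T g) μ μ)
    (hadd : ∀ g h x, T (g + h) x = T g (T h x)) (hzero : ∀ x, T 0 x = x)
    (Y V₀ : Set X) (hYmeas : MeasurableSet Y) (hV₀ : MeasurableSet V₀)
    (hμY : μ Y = 1)
    (C : Finset ℤ) (hCne : C.Nonempty)
    (h : ℕ) (hpos : 0 < h)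
    (hbase : Y = ⋃ c ∈ C, T c '' V₀)
    (hdisjC : ∀ c ∈ C, ∀ c' ∈ C, c ≠ c' → Disjoint (T c '' V₀) (T c' '' V₀))
    (hlevel : ∀ c ∈ C, μ (T c '' V₀) = 1 / (C.card : ℝ≥0∞))
    (htowerdisj : ∀ i j : ℕ, i < h → j < h → i ≠ j →
      Disjoint (T (i:ℤ) '' V₀) (T (j:ℤ) '' V₀))
    (htower : ∀ c ∈ C, ∀ c' ∈ C, c' ≤ c →
      T (c - c') '' V₀ ⊆ ⋃ i ∈ Finset.range h, T (i:ℤ) '' V₀) :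
    ∀ A B : Set X, A ⊆ Y → B ⊆ Y → MeasurableSet A → MeasurableSet B →
      ∑ k ∈ Finset.range h, μ (A ∩ T (k:ℤ) '' B) ≤
        2 * min (μ A) (μ B) * ∑ k ∈ Finset.range h, μ (Y ∩ T (k:ℤ) '' Y) :=
  stmt10_general μ T hmp hadd hzero Y V₀ hV₀ C hCne h hbase hdisjC hlevel htowerdisj htower
end

section
/- Let G be an abelian countable group, T an i.m.p. (C,F)-action of G with the large-holes condition of Theorem 2.8, and let C := C_1 + ⋯ + C_n. Then for arbitrary measurable A, B ⊆ [0]_0 (the base of measure μ([0]_0) = 1): Σ_{g ∈ F_n − F_n} μ(A ∩ T_g B) ≤ min(μ(A), μ(B)) · Σ_{g ∈ F_n − F_n} μ([0]_0 ∩ T_g [0]_0), and moreover Σ_{g ∈ F_n − F_n} μ([0]_0 ∩ T_g [0]_0) = #C. -/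
/-!
Split `A` and `B` along the partition of `Y` into the sets `V c`, `c ∈ C`. By the support
condition the piece `(A ∩ V c) ∩ T g '' (B ∩ V c')` of `A ∩ T g '' B` is null unless
`g = c - c'`, and `E` contains every `c - c'`, so summing over `g ∈ E` counts each pair
`(c, c')` exactly once:
`∑ g ∈ E, μ (A ∩ T g '' B) = ∑ (c, c'), μ ((A ∩ V c) ∩ T (c - c') '' (B ∩ V c'))`.
Each term is at most `μ (A ∩ V c)` and at most `μ (B ∩ V c')`, whence the bound
`min (μ A) (μ B) * #C`; for `A = B = Y` each term is `μ (V c) = 1 / #C`, since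
`T (c - c') '' V c' = V c` almost everywhere, whence the value `#C`.
-/

open MeasureTheory
open scoped ENNReal

section Translation

variable {G X : Type*} [AddGroup G] {T : G → X → X}

theorem leftInverse_neg_of_add (hadd : ∀ g h x, T (g + h) x = T g (T h x))
    (hzero : ∀ x, T 0 x = x) (g : G) : Function.LeftInverse (T (-g)) (T g) := fun x => by
  rw [← hadd, neg_add_cancel, hzero]

theorem rightInverse_neg_of_add (hadd : ∀ g h x, T (g + h) x = T g (T h x))
    (hzero : ∀ x, T 0 x = x) (g : G) : Function.RightInverse (T (-g)) (T g) := fun x => by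
  rw [← hadd, add_neg_cancel, hzero]

theorem measurableEmbedding_of_add [MeasurableSpace X]
    (hadd : ∀ g h x, T (g + h) x = T g (T h x)) (hzero : ∀ x, T 0 x = x)
    (hT : ∀ g, Measurable (T g)) (g : G) : MeasurableEmbedding (T g) := by
  refine .of_measurable_inverse (hT g) ?_ (hT (-g)) (leftInverse_neg_of_add hadd hzero g)
  rw [(rightInverse_neg_of_add hadd hzero g).surjective.range_eq]
  exact .univ

end Translation

theorem MeasureTheory.MeasurePreserving.measure_image_emb {α β : Type*} [MeasurableSpace α]
    [MeasurableSpace β] {μa : Measure α} {μb : Measure β} {f : α → β}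
    (hf : MeasurePreserving f μa μb) (hfe : MeasurableEmbedding f) (S : Set α) :
    μb (f '' S) = μa S := by
  rw [← hf.measure_preimage_emb hfe, hfe.injective.preimage_image]

section Partition

variable {ι X : Type*} {V : ι → Set X} {C : Finset ι}

theorem inter_image_eq_biUnion_product (f : X → X) {A B : Set X} (hA : A ⊆ ⋃ c ∈ C, V c)
    (hB : B ⊆ ⋃ c ∈ C, V c) :
    A ∩ f '' B = ⋃ p ∈ C ×ˢ C, (A ∩ V p.1) ∩ f '' (B ∩ V p.2) := by
  ext x
  simp only [Set.mem_inter_iff, Set.mem_image, Set.mem_iUnion, Finset.mem_product]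
  constructor
  · rintro ⟨hxA, y, hyB, rfl⟩
    obtain ⟨c, hc, hxc⟩ := Set.mem_iUnion₂.mp (hA hxA)
    obtain ⟨c', hc', hyc'⟩ := Set.mem_iUnion₂.mp (hB hyB)
    exact ⟨(c, c'), ⟨hc, hc'⟩, ⟨hxA, hxc⟩, y, ⟨hyB, hyc'⟩, rfl⟩
  · rintro ⟨p, -, ⟨hxA, -⟩, y, ⟨hyB, -⟩, rfl⟩
    exact ⟨hxA, y, hyB, rfl⟩

variable [MeasurableSpace X] {μ : Measure X}

theorem measure_eq_sum_measure_inter (hV : ∀ c ∈ C, MeasurableSet (V c))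
    (hdisj : (C : Set ι).PairwiseDisjoint V) {A : Set X} (hA : MeasurableSet A)
    (hAV : A ⊆ ⋃ c ∈ C, V c) : μ A = ∑ c ∈ C, μ (A ∩ V c) := by
  conv_lhs => rw [← Set.inter_eq_left.mpr hAV, Set.inter_iUnion₂]
  exact measure_biUnion_finset (hdisj.mono fun _ => Set.inter_subset_right)
    fun c hc => hA.inter (hV c hc)

theorem measure_inter_image_eq_sum_product (hV : ∀ c ∈ C, MeasurableSet (V c))
    (hdisj : (C : Set ι).PairwiseDisjoint V) {f : X → X} (hf : MeasurableEmbedding f)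
    {A B : Set X} (hA : MeasurableSet A) (hB : MeasurableSet B) (hAV : A ⊆ ⋃ c ∈ C, V c)
    (hBV : B ⊆ ⋃ c ∈ C, V c) :
    μ (A ∩ f '' B) = ∑ p ∈ C ×ˢ C, μ ((A ∩ V p.1) ∩ f '' (B ∩ V p.2)) := by
  rw [inter_image_eq_biUnion_product f hAV hBV]
  refine measure_biUnion_finset ?_ fun p hp => ?_
  · rintro ⟨c, c'⟩ hp ⟨d, d'⟩ hq hne
    simp only [Finset.coe_product, Set.mem_prod, Finset.mem_coe] at hp hq
    by_cases hcd : c = d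
    · have hcd' : c' ≠ d' := fun h => hne (by rw [hcd, h])
      exact (((Set.disjoint_image_iff hf.injective).mpr (hdisj hp.2 hq.2 hcd')).mono
        (Set.image_mono Set.inter_subset_right) (Set.image_mono Set.inter_subset_right)).mono
        Set.inter_subset_right Set.inter_subset_right
    · exact (hdisj hp.1 hq.1 hcd).mono (fun _ h => h.1.2) (fun _ h => h.1.2)
  · rw [Finset.mem_product] at hp
    exact (hA.inter (hV _ hp.1)).inter (hf.measurableSet_image.mpr (hB.inter (hV _ hp.2)))

end Partition

section Correlation

variable {G X : Type*} [AddGroup G] [MeasurableSpace X] {μ : Measure X} {T : G → X → X}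
  {V : G → Set X} {C E : Finset G}

theorem sum_measure_inter_image_eq_sum_product (hT : ∀ g, MeasurableEmbedding (T g))
    (hV : ∀ c ∈ C, MeasurableSet (V c)) (hdisj : (C : Set G).PairwiseDisjoint V)
    (hdiffE : ∀ c ∈ C, ∀ c' ∈ C, c - c' ∈ E)
    (hsupport : ∀ g ∈ E, ∀ c ∈ C, ∀ c' ∈ C, g ≠ c - c' → μ (V c ∩ T g '' V c') = 0)
    {A B : Set X} (hA : MeasurableSet A) (hB : MeasurableSet B) (hAV : A ⊆ ⋃ c ∈ C, V c)
    (hBV : B ⊆ ⋃ c ∈ C, V c) :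
    ∑ g ∈ E, μ (A ∩ T g '' B) =
      ∑ p ∈ C ×ˢ C, μ ((A ∩ V p.1) ∩ T (p.1 - p.2) '' (B ∩ V p.2)) := by
  classical
  rw [← Finset.sum_fiberwise_of_maps_to (g := fun p : G × G => p.1 - p.2)
    fun p hp => hdiffE p.1 (Finset.mem_product.mp hp).1 p.2 (Finset.mem_product.mp hp).2]
  refine Finset.sum_congr rfl fun g hg => ?_
  rw [measure_inter_image_eq_sum_product hV hdisj (hT g) hA hB hAV hBV,
    ← Finset.sum_filter_of_ne (p := fun p : G × G => p.1 - p.2 = g) fun p hp hne => ?_]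
  · exact Finset.sum_congr rfl fun p hp => by rw [(Finset.mem_filter.mp hp).2]
  · rw [Finset.mem_product] at hp
    by_contra hg'
    refine hne (measure_mono_null ?_ (hsupport g hg p.1 hp.1 p.2 hp.2 (Ne.symm hg')))
    exact Set.inter_subset_inter Set.inter_subset_right (Set.image_mono Set.inter_subset_right)

theorem sum_product_measure_inter_image_le (hmp : ∀ g, MeasurePreserving (T g) μ μ)
    (hT : ∀ g, MeasurableEmbedding (T g)) (hV : ∀ c ∈ C, MeasurableSet (V c))
    (hdisj : (C : Set G).PairwiseDisjoint V) {A B : Set X} (hA : MeasurableSet A)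
    (hB : MeasurableSet B) (hAV : A ⊆ ⋃ c ∈ C, V c) (hBV : B ⊆ ⋃ c ∈ C, V c) :
    ∑ p ∈ C ×ˢ C, μ ((A ∩ V p.1) ∩ T (p.1 - p.2) '' (B ∩ V p.2)) ≤
      min (μ A) (μ B) * C.card := by
  rw [min_mul]
  refine le_min ?_ ?_
  · calc _ ≤ ∑ p ∈ C ×ˢ C, μ (A ∩ V p.1) :=
          Finset.sum_le_sum fun p _ => measure_mono Set.inter_subset_left
      _ = μ A * C.card := by
          rw [Finset.sum_product, measure_eq_sum_measure_inter hV hdisj hA hAV, Finset.sum_mul]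
          simp [mul_comm]
  · calc _ ≤ ∑ p ∈ C ×ˢ C, μ (B ∩ V p.2) := Finset.sum_le_sum fun p _ =>
          (measure_mono Set.inter_subset_right).trans_eq ((hmp _).measure_image_emb (hT _) _)
      _ = μ B * C.card := by
          rw [Finset.sum_product_right, measure_eq_sum_measure_inter hV hdisj hB hBV,
            Finset.sum_mul]
          simp [mul_comm]

end Correlation

theorem measure_inter_of_measure_symmDiff_eq_zero {X : Type*} [MeasurableSpace X]
    {μ : Measure X} {s t : Set X} (h : μ (symmDiff s t) = 0) : μ (s ∩ t) = μ s := by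
  rw [measure_congr ((ae_eq_refl s).inter (measure_symmDiff_eq_zero_iff.mp h).symm),
    Set.inter_self]

theorem stmt13_general {G : Type*} [AddCommGroup G]
    {X : Type*} [MeasurableSpace X] (μ : Measure X)
    (T : G → X → X) (hmp : ∀ g, MeasurePreserving (T g) μ μ)
    (hadd : ∀ g h x, T (g + h) x = T g (T h x)) (hzero : ∀ x, T 0 x = x)
    (Y : Set X)
    (V : G → Set X) (hVmeas : ∀ c, MeasurableSet (V c))
    (C E : Finset G) (hCne : C.Nonempty)
    (hbase : Y = ⋃ c ∈ C, V c)
    (hdisj : ∀ c ∈ C, ∀ c' ∈ C, c ≠ c' → Disjoint (V c) (V c'))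
    (hμV : ∀ c ∈ C, μ (V c) = 1 / (C.card : ℝ≥0∞))
    (hdiffE : ∀ c ∈ C, ∀ c' ∈ C, c - c' ∈ E)
    (hsupport : ∀ g ∈ E, ∀ c ∈ C, ∀ c' ∈ C, g ≠ c - c' → μ (V c ∩ T g '' V c') = 0)
    (hcopy : ∀ c ∈ C, ∀ c' ∈ C, μ (symmDiff (V c) (T (c - c') '' V c')) = 0) :
    (∀ A B : Set X, A ⊆ Y → B ⊆ Y → MeasurableSet A → MeasurableSet B →
      ∑ g ∈ E, μ (A ∩ T g '' B) ≤ min (μ A) (μ B) * ∑ g ∈ E, μ (Y ∩ T g '' Y)) ∧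
    ∑ g ∈ E, μ (Y ∩ T g '' Y) = (C.card : ℝ≥0∞) := by
  subst hbase
  have hT : ∀ g, MeasurableEmbedding (T g) :=
    measurableEmbedding_of_add hadd hzero fun g => (hmp g).measurable
  have hV : ∀ c ∈ C, MeasurableSet (V c) := fun c _ => hVmeas c
  have hdisj' : (C : Set G).PairwiseDisjoint V := fun c hc c' hc' => hdisj c hc c' hc'
  have hY : MeasurableSet (⋃ c ∈ C, V c) := Finset.measurableSet_biUnion C hV
  have hsecond : ∑ g ∈ E, μ ((⋃ c ∈ C, V c) ∩ T g '' ⋃ c ∈ C, V c) = C.card := by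
    rw [sum_measure_inter_image_eq_sum_product hT hV hdisj' hdiffE hsupport hY hY subset_rfl
      subset_rfl]
    calc _ = ∑ _ ∈ C ×ˢ C, 1 / (C.card : ℝ≥0∞) := Finset.sum_congr rfl fun p hp => by
          obtain ⟨hc, hc'⟩ := Finset.mem_product.mp hp
          rw [Set.inter_eq_right.mpr (Finset.subset_set_biUnion_of_mem hc),
            Set.inter_eq_right.mpr (Finset.subset_set_biUnion_of_mem hc'),
            measure_inter_of_measure_symmDiff_eq_zero (hcopy _ hc _ hc'), hμV _ hc]
      _ = C.card := by
          rw [Finset.sum_const, Finset.card_product, nsmul_eq_mul, Nat.cast_mul, mul_assoc,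
            one_div, ENNReal.mul_inv_cancel (by simpa using hCne.ne_empty)
              (ENNReal.natCast_ne_top _), mul_one]
  refine ⟨fun A B hAY hBY hA hB => ?_, hsecond⟩
  rw [hsecond, sum_measure_inter_image_eq_sum_product hT hV hdisj' hdiffE hsupport hA hB hAY hBY]
  exact sum_product_measure_inter_image_le hmp hT hV hdisj' hA hB hAY hBY

/-- Claim 4 in the proof of Theorem 2.8: for an i.m.p. (C,F)-action of an abelian
group satisfying the large-holes condition, the correlation sums over `E = F_n − F_n`
of arbitrary subsets of the base `Y = [0]_0` are dominated by
`min(μ(A),μ(B)) · Σ_{g∈E} μ(Y ∩ T_g Y)`, and moreover `Σ_{g∈E} μ(Y ∩ T_g Y) = #C`. -/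
theorem stmt13 {G : Type*} [AddCommGroup G] [Countable G]
    {X : Type*} [MeasurableSpace X] (μ : Measure X) [SigmaFinite μ]
    (hinf : μ Set.univ = ⊤)
    (T : G → X → X) (hmp : ∀ g, MeasurePreserving (T g) μ μ)
    (hadd : ∀ g h x, T (g + h) x = T g (T h x)) (hzero : ∀ x, T 0 x = x)
    (Y : Set X) (hY : MeasurableSet Y) (hμY : μ Y = 1)
    (V : G → Set X) (hVmeas : ∀ c, MeasurableSet (V c))
    (C E : Finset G) (hCne : C.Nonempty)
    (hbase : Y = ⋃ c ∈ C, V c)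
    (hdisj : ∀ c ∈ C, ∀ c' ∈ C, c ≠ c' → Disjoint (V c) (V c'))
    (hμV : ∀ c ∈ C, μ (V c) = 1 / (C.card : ℝ≥0∞))
    (hdiffE : ∀ c ∈ C, ∀ c' ∈ C, c - c' ∈ E)
    (hsupport : ∀ g ∈ E, ∀ c ∈ C, ∀ c' ∈ C, g ≠ c - c' → μ (V c ∩ T g '' V c') = 0)
    (hcopy : ∀ c ∈ C, ∀ c' ∈ C, μ (symmDiff (V c) (T (c - c') '' V c')) = 0) :
    (∀ A B : Set X, A ⊆ Y → B ⊆ Y → MeasurableSet A → MeasurableSet B →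
      ∑ g ∈ E, μ (A ∩ T g '' B) ≤ min (μ A) (μ B) * ∑ g ∈ E, μ (Y ∩ T g '' Y)) ∧
    ∑ g ∈ E, μ (Y ∩ T g '' Y) = (C.card : ℝ≥0∞) :=
  stmt13_general μ T hmp hadd hzero Y V hVmeas C E hCne hbase hdisj hμV hdiffE hsupport hcopy
end
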